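/- arXiv:2510.15020 — 10 statements merged into one kernel-verified Lean document; each statement's English description precedes it below -/
import Mathlib

section
/- For conditional distributions π_D and π from X to Δ(Y), a prompt distribution μ over X, and any N ≥ e, the coverage profile satisfies P_{x∼μ, y∼π_D(·|x)}[π_D(y|x)/π(y|x) ≥ N] ≤ KL(π_D ‖ π) / (log N − 1 + 1/N), where KL(π_D ‖ π) := E_{x∼μ, y∼π_D(·|x)}[log(π_D(y|x)/π(y|x))]. -/
open scoped BigOperators Classical

/-- Coverage profile on finite prompt/response spaces:
`P_{x∼μ, y∼p(·|x)}[ p(y|x)/q(y|x) ≥ N ]`. -/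
noncomputable def covProfile {X Y : Type*} [Fintype X] [Fintype Y]
    (μ : X → ℝ) (p q : X → Y → ℝ) (N : ℝ) : ℝ :=
  ∑ x, ∑ y, μ x * p x y * (if N ≤ p x y / q x y then 1 else 0)

/-- Sequence-level KL divergence `E_{x∼μ, y∼p(·|x)} log(p(y|x)/q(y|x))`. -/
noncomputable def klDiv {X Y : Type*} [Fintype X] [Fintype Y]
    (μ : X → ℝ) (p q : X → Y → ℝ) : ℝ :=
  ∑ x, ∑ y, μ x * p x y * Real.log (p x y / q x y)

/-- Pointwise key inequality: for `c = log N - 1 + 1/N`,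
`c * p * 1[p/q ≥ N] ≤ p log(p/q) + q - p`. -/
lemma key_ineq (N p q : ℝ) (hp : 0 ≤ p) (hq : 0 ≤ q) (habs : 0 < p → 0 < q)
    (hN : Real.exp 1 ≤ N) :
    (Real.log N - 1 + 1 / N) * (p * (if N ≤ p / q then 1 else 0)) ≤
      p * Real.log (p / q) + q - p := by
  have hN2 : (2 : ℝ) ≤ N := le_trans (by nlinarith [Real.add_one_le_exp (1:ℝ)]) hN
  rcases eq_or_lt_of_le hp with h0 | hp0
  · simp [← h0]; positivity
  · have hq0 : 0 < q := habs hp0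
    set r : ℝ := p / q with hr
    have hr0 : 0 < r := div_pos hp0 hq0
    have hpq : p = r * q := by rw [hr, div_mul_cancel₀ p (ne_of_gt hq0)]
    by_cases h : N ≤ r
    · simp only [if_pos h, mul_one]
      have hr1 : 0 < N / r := by positivity
      have hlog : Real.log (N / r) ≤ N / r - 1 := Real.log_le_sub_one_of_pos hr1
      have hlogd : Real.log (N / r) = Real.log N - Real.log r :=
        Real.log_div (by linarith) (ne_of_gt hr0)
      have hNr : N / r * r = N := div_mul_cancel₀ N (ne_of_gt hr0)
      -- log r ≥ log N + 1 - N/r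
      have h1 : Real.log N + 1 - N / r ≤ Real.log r := by linarith
      have hlgoal : (Real.log N - 1 + 1 / N) * p ≤ p * Real.log r + q - p := by
        rw [hpq]
        have hNpos : (0:ℝ) < N := by linarith
        have h2 : r * q * (Real.log N + 1 - N / r) ≤ r * q * Real.log r :=
          mul_le_mul_of_nonneg_left h1 (by positivity)
        have h3 : r * q * (N / r) = N * q := by field_simp
        have h4 : (Real.log N - 1 + 1 / N) * (r * q) =
            r * q * Real.log N - r * q + r * q / N := by field_simp
        have h5 : r * q / N ≤ q - N * q + r * q := by
          rw [div_le_iff₀ hNpos]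
          nlinarith [mul_le_mul_of_nonneg_left h (le_of_lt hq0)]
        nlinarith
      exact hlgoal
    · simp only [if_neg h, mul_zero, mul_zero]
      have hlog : Real.log (1 / r) ≤ 1 / r - 1 := Real.log_le_sub_one_of_pos (by positivity)
      rw [Real.log_div one_ne_zero (ne_of_gt hr0), Real.log_one] at hlog
      have : -(r * Real.log r) ≤ 1 - r := by
        have := mul_le_mul_of_nonneg_left hlog (le_of_lt hr0)
        have hrr : r * (1 / r) = 1 := mul_one_div_cancel (ne_of_gt hr0)
        nlinarith
      rw [hpq]
      nlinarith [mul_le_mul_of_nonneg_left this (le_of_lt hq0)]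

/-- KL-to-coverage conversion: for `N ≥ e`,
`Pcov_N(π_D ‖ π) ≤ KL(π_D ‖ π) / (log N − 1 + 1/N)`. -/
theorem coverage_le_kl_div {X Y : Type*} [Fintype X] [Fintype Y]
    (μ : X → ℝ) (πD π : X → Y → ℝ)
    (hμ0 : ∀ x, 0 ≤ μ x) (hμ1 : ∑ x, μ x = 1)
    (hπD0 : ∀ x y, 0 ≤ πD x y) (hπD1 : ∀ x, ∑ y, πD x y = 1)
    (hπ0 : ∀ x y, 0 ≤ π x y) (hπ1 : ∀ x, ∑ y, π x y = 1)
    (habs : ∀ x y, 0 < πD x y → 0 < π x y)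
    (N : ℝ) (hN : Real.exp 1 ≤ N) :
    covProfile μ πD π N ≤ klDiv μ πD π / (Real.log N - 1 + 1 / N) := by
  set c : ℝ := Real.log N - 1 + 1 / N with hc
  have hN2 : (2 : ℝ) ≤ N := le_trans (by nlinarith [Real.add_one_le_exp (1:ℝ)]) hN
  have hNpos : (0:ℝ) < N := by linarith
  have hlogN : (1:ℝ) ≤ Real.log N := by
    calc (1:ℝ) = Real.log (Real.exp 1) := (Real.log_exp 1).symm
    _ ≤ Real.log N := Real.log_le_log (Real.exp_pos 1) hN
  have hcpos : 0 < c := by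
    have : 0 < 1 / N := by positivity
    simp only [hc]; linarith
  rw [le_div_iff₀ hcpos]
  have hmain : covProfile μ πD π N * c ≤
      ∑ x, ∑ y, μ x * (πD x y * Real.log (πD x y / π x y) + π x y - πD x y) := by
    rw [covProfile, Finset.sum_mul]
    apply Finset.sum_le_sum
    intro x _
    rw [Finset.sum_mul]
    apply Finset.sum_le_sum
    intro y _
    have h := key_ineq N (πD x y) (π x y) (hπD0 x y) (hπ0 x y) (habs x y) hN
    calc μ x * πD x y * (if N ≤ πD x y / π x y then 1 else 0) * c
        = μ x * (c * (πD x y * (if N ≤ πD x y / π x y then 1 else 0))) := by ring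
      _ ≤ μ x * (πD x y * Real.log (πD x y / π x y) + π x y - πD x y) := by
          apply mul_le_mul_of_nonneg_left h (hμ0 x)
  refine hmain.trans (le_of_eq ?_)
  rw [klDiv]
  apply Finset.sum_congr rfl
  intro x _
  have : ∑ y, μ x * (πD x y * Real.log (πD x y / π x y) + π x y - πD x y)
      = (∑ y, μ x * (πD x y * Real.log (πD x y / π x y)))
        + μ x * ((∑ y, π x y) - ∑ y, πD x y) := by
    simp only [mul_sub, Finset.mul_sum, ← Finset.sum_add_distrib, ← Finset.sum_sub_distrib]
    apply Finset.sum_congr rfl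
    intro y _; ring
  rw [this, hπ1, hπD1]
  simp [mul_assoc]
end

section
/- For any N ≥ 2 there exist Bernoulli distributions π_D = Ber(p) and π̂ = Ber(p/N) with p ≤ 1/2 such that P_{y∼π_D}[π_D(y)/π̂(y) ≥ N] ≥ KL(π_D ‖ π̂) / (log N − 1/2 + 1/(2N)). In particular the coverage profile equals p and KL(π_D ‖ π̂) ≤ p·(log N − 1/2 + 1/(2N)). -/
open scoped BigOperators Classical

/-- Bernoulli pmf on `Bool` with success probability `p`. -/
noncomputable def bern (p : ℝ) : Bool → ℝ := fun y => if y then p else 1 - p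

/-- Coverage profile `P_{y∼p}[ p(y)/q(y) ≥ N ]` for pmfs on `Bool`. -/
noncomputable def covB (p q : Bool → ℝ) (N : ℝ) : ℝ :=
  ∑ y, p y * (if N ≤ p y / q y then 1 else 0)

/-- KL divergence between pmfs on `Bool`. -/
noncomputable def klB (p q : Bool → ℝ) : ℝ :=
  ∑ y, p y * Real.log (p y / q y)

/-- Tightness of the KL-to-coverage conversion: for any `N ≥ 2` there are Bernoulli
distributions `π_D = Ber(p)`, `π̂ = Ber(p/N)` with `p ≤ 1/2` such that
`Pcov_N(π_D ‖ π̂) ≥ KL(π_D ‖ π̂) / (log N − 1/2 + 1/(2N))`; moreover the coverage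
profile equals `p` and `KL(π_D ‖ π̂) ≤ p (log N − 1/2 + 1/(2N))`. -/
theorem coverage_kl_tightness (N : ℝ) (hN : 2 ≤ N) :
    ∃ p : ℝ, 0 < p ∧ p ≤ 1 / 2 ∧
      covB (bern p) (bern (p / N)) N ≥
        klB (bern p) (bern (p / N)) / (Real.log N - 1 / 2 + 1 / (2 * N)) ∧
      covB (bern p) (bern (p / N)) N = p ∧
      klB (bern p) (bern (p / N)) ≤ p * (Real.log N - 1 / 2 + 1 / (2 * N)) := by
  have hN0 : (0:ℝ) < N := by linarith
  have h2N1 : (0:ℝ) < 2 * N - 1 := by linarith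
  have hq : (0:ℝ) < 1 - 1/2/N := by
    rw [sub_pos, div_lt_one hN0]; linarith
  have hlog2 : (0.6931471803 : ℝ) < Real.log 2 := Real.log_two_gt_d9
  have hlogN : Real.log 2 ≤ Real.log N := Real.log_le_log (by norm_num) hN
  have hD : 0 < Real.log N - 1 / 2 + 1 / (2 * N) := by
    have : 0 < 1 / (2 * N) := by positivity
    linarith
  have hratio1 : (1/2 : ℝ) / (1/2 / N) = N := by field_simp
  have hratio2 : (1/2 : ℝ) / (1 - 1/2/N) = N / (2*N - 1) := by
    rw [div_eq_div_iff hq.ne' h2N1.ne']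
    field_simp
  have hcov : covB (bern (1/2)) (bern (1/2 / N)) N = 1/2 := by
    simp only [covB, bern, Fintype.sum_bool, Bool.false_eq_true, if_true, if_false]
    have e : (1:ℝ) - 1/2 = 1/2 := by norm_num
    rw [e, hratio1, hratio2]
    have h1 : N ≤ N := le_refl N
    have h2 : ¬ N ≤ N / (2*N - 1) := by
      rw [not_le, div_lt_iff₀ h2N1]
      nlinarith
    simp [h1, h2]
  have hkl : klB (bern (1/2)) (bern (1/2 / N)) =
      1/2 * Real.log N + 1/2 * Real.log (N / (2*N - 1)) := by
    simp only [klB, bern, Fintype.sum_bool, Bool.false_eq_true, if_true, if_false]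
    have e : (1:ℝ) - 1/2 = 1/2 := by norm_num
    rw [e, hratio1, hratio2]
  have hsplit : Real.log ((2*N-1)/N) = Real.log (2*N-1) - Real.log N :=
    Real.log_div h2N1.ne' hN0.ne'
  have hsplit2 : Real.log (N/(2*N-1)) = Real.log N - Real.log (2*N-1) :=
    Real.log_div hN0.ne' h2N1.ne'
  have hlb : 1 - N/(2*N-1) ≤ Real.log ((2*N-1)/N) := by
    have h := Real.log_le_sub_one_of_pos (show (0:ℝ) < N/(2*N-1) by positivity)
    rw [hsplit2] at h
    rw [hsplit]
    linarith
  have hkey : (N-1)/(2*N) ≤ Real.log ((2*N-1)/N) := by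
    have h1 : 1 - N/(2*N-1) = (N-1)/(2*N-1) := by rw [one_sub_div h2N1.ne']; ring
    have h2 : (N-1)/(2*N) ≤ (N-1)/(2*N-1) :=
      div_le_div_of_nonneg_left (by linarith) h2N1 (by linarith)
    linarith
  have hklle : klB (bern (1/2)) (bern (1/2 / N)) ≤
      1/2 * (Real.log N - 1 / 2 + 1 / (2 * N)) := by
    rw [hkl]
    have heq : (N-1)/(2*N) = 1/2 - 1/(2*N) := by field_simp
    rw [hsplit] at hkey
    rw [hsplit2]
    nlinarith
  refine ⟨1/2, by norm_num, le_refl _, ?_, hcov, hklle⟩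
  rw [hcov, ge_iff_le, div_le_iff₀ hD]
  linarith
end

section
/- Let π, π_D : X → Δ(Y) with W_max := sup_{x,y} π_D(y|x)/π(y|x) finite, and define C := sup_{N ≥ 1} {Pcov_N(π_D ‖ π) · log N}. Then KL(π_D ‖ π) ≤ C · (1 + log(log(W_max)/C)). -/
open scoped BigOperators Classical

set_option maxHeartbeats 1000000

lemma intervalIntegrable_sum_fun {ι : Type*} {E : Type*} [NormedAddCommGroup E]
    {μ : MeasureTheory.Measure ℝ} {a b : ℝ} (s : Finset ι) {f : ι → ℝ → E}
    (h : ∀ i ∈ s, IntervalIntegrable (f i) μ a b) :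
    IntervalIntegrable (fun t => ∑ i ∈ s, f i t) μ a b := by
  have h' := IntervalIntegrable.sum s h
  have he : (∑ i ∈ s, f i) = fun t => ∑ i ∈ s, f i t := by funext t; simp
  rwa [he] at h'

open MeasureTheory intervalIntegral in
/-- The indicator `t ↦ 1_{exp t ≤ w}` is interval integrable. -/
lemma ind_intervalIntegrable (w a b : ℝ) :
    IntervalIntegrable (fun t => if Real.exp t ≤ w then (1:ℝ) else 0)
      MeasureTheory.volume a b := by
  have hs : MeasurableSet {t : ℝ | Real.exp t ≤ w} :=
    measurableSet_le Real.measurable_exp measurable_const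
  have heq : (fun t => if Real.exp t ≤ w then (1:ℝ) else 0)
      = Set.indicator {t : ℝ | Real.exp t ≤ w} (fun _ => (1:ℝ)) := by
    ext t; by_cases h : Real.exp t ≤ w <;> simp [Set.indicator, h]
  rw [heq, intervalIntegrable_iff]
  exact (MeasureTheory.integrableOn_const measure_Ioc_lt_top.ne).indicator hs

open MeasureTheory intervalIntegral in
lemma log_le_integral_ind (w L : ℝ) (hw : 0 < w) (hL : 0 ≤ L) (hwL : Real.log w ≤ L) :
    Real.log w ≤ ∫ t in (0:ℝ)..L, (if Real.exp t ≤ w then (1:ℝ) else 0) := by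
  by_cases hneg : Real.log w ≤ 0
  · refine hneg.trans ?_
    apply intervalIntegral.integral_nonneg hL
    intro t _
    by_cases h : Real.exp t ≤ w <;> simp [h]
  · push_neg at hneg
    have h1 : (∫ t in (0:ℝ)..(Real.log w), (if Real.exp t ≤ w then (1:ℝ) else 0))
        = Real.log w := by
      rw [intervalIntegral.integral_congr (g := fun _ => (1:ℝ))]
      · simp
      · intro t ht
        rw [Set.uIcc_of_le hneg.le] at ht
        have : Real.exp t ≤ w := by
          calc Real.exp t ≤ Real.exp (Real.log w) := Real.exp_le_exp.2 ht.2
          _ = w := Real.exp_log hw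
        simp [this]
    have h2 : (∫ t in (Real.log w)..L, (if Real.exp t ≤ w then (1:ℝ) else 0)) = 0 := by
      rw [intervalIntegral.integral_congr_ae (g := fun _ => (0:ℝ))]
      · simp
      · filter_upwards with t ht
        rw [Set.uIoc_of_le hwL] at ht
        have : ¬ Real.exp t ≤ w := by
          have := Real.exp_lt_exp.2 ht.1
          rw [Real.exp_log hw] at this
          linarith
        simp [this]
    have := intervalIntegral.integral_add_adjacent_intervals
      (a := (0:ℝ)) (b := Real.log w) (c := L)
      (ind_intervalIntegrable w 0 (Real.log w)) (ind_intervalIntegrable w (Real.log w) L)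
    rw [← this, h1, h2]
    simp

/-- Uniform coverage decay implies bounded KL: with
`W_max = sup_{x,y} π_D(y|x)/π(y|x)` and `C = sup_{N ≥ 1} Pcov_N(π_D‖π)·log N`,
`KL(π_D ‖ π) ≤ C (1 + log(log(W_max)/C))`. -/
theorem kl_le_of_uniform_coverage_decay {X Y : Type*} [Fintype X] [Fintype Y]
    (μ : X → ℝ) (πD π : X → Y → ℝ)
    (hμ0 : ∀ x, 0 ≤ μ x) (hμ1 : ∑ x, μ x = 1)
    (hπD0 : ∀ x y, 0 ≤ πD x y) (hπD1 : ∀ x, ∑ y, πD x y = 1)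
    (hπ0 : ∀ x y, 0 ≤ π x y) (hπ1 : ∀ x, ∑ y, π x y = 1)
    (habs : ∀ x y, 0 < πD x y → 0 < π x y)
    (Wmax : ℝ)
    (hW : IsLUB {w : ℝ | ∃ x y, 0 < πD x y ∧ w = πD x y / π x y} Wmax)
    (C : ℝ) (hC0 : 0 < C)
    (hC : IsLUB {c : ℝ | ∃ N : ℝ, 1 ≤ N ∧ c = covProfile μ πD π N * Real.log N} C) :
    klDiv μ πD π ≤ C * (1 + Real.log (Real.log Wmax / C)) := by
  classical
  set L := Real.log Wmax with hLdef
  have hWub : ∀ x y, 0 < πD x y → πD x y / π x y ≤ Wmax := fun x y h =>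
    hW.1 ⟨x, y, h, rfl⟩
  -- X is nonempty
  obtain ⟨x0⟩ : Nonempty X := by
    rcases isEmpty_or_nonempty X with h | h
    · simp at hμ1
    · exact h
  -- there is y0 with πD x0 y0 > 0 and π x0 y0 ≤ πD x0 y0
  obtain ⟨y0, hy0pos, hy0le⟩ : ∃ y, 0 < πD x0 y ∧ π x0 y ≤ πD x0 y := by
    by_contra hcon
    push_neg at hcon
    have hlt : ∀ y, πD x0 y ≤ π x0 y := by
      intro y
      rcases (hπD0 x0 y).lt_or_eq with h | h
      · exact (hcon y h).le
      · rw [← h]; exact hπ0 x0 y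
    obtain ⟨ys, hys⟩ : ∃ y, 0 < πD x0 y := by
      by_contra hall
      push_neg at hall
      have : ∀ y, πD x0 y = 0 := fun y => le_antisymm (hall y) (hπD0 x0 y)
      have := hπD1 x0
      simp [this] at this
      · simpa [‹∀ y, πD x0 y = 0›] using hπD1 x0
    have hstrict : πD x0 ys < π x0 ys := hcon ys hys
    have : (∑ y, πD x0 y) < ∑ y, π x0 y :=
      Finset.sum_lt_sum (fun y _ => hlt y) ⟨ys, Finset.mem_univ ys, hstrict⟩
    rw [hπD1, hπ1] at this
    exact lt_irrefl _ this
  have hW1 : (1:ℝ) ≤ Wmax := by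
    have hπpos := habs _ _ hy0pos
    have h1 : (1:ℝ) ≤ πD x0 y0 / π x0 y0 := (one_le_div hπpos).2 hy0le
    exact h1.trans (hWub x0 y0 hy0pos)
  have hL0 : 0 ≤ L := Real.log_nonneg hW1
  -- covProfile is at most 1
  have cov_le_one : ∀ N : ℝ, covProfile μ πD π N ≤ 1 := by
    intro N
    have h1 : covProfile μ πD π N ≤ ∑ x, ∑ y, μ x * πD x y := by
      apply Finset.sum_le_sum; intro x _
      apply Finset.sum_le_sum; intro y _
      have h0 : 0 ≤ μ x * πD x y := mul_nonneg (hμ0 x) (hπD0 x y)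
      by_cases h : N ≤ πD x y / π x y <;> simp [h, h0]
    have h2 : (∑ x, ∑ y, μ x * πD x y) = 1 := by
      calc (∑ x, ∑ y, μ x * πD x y) = ∑ x, μ x * ∑ y, πD x y := by
            simp [Finset.mul_sum]
        _ = ∑ x, μ x := by simp [hπD1]
        _ = 1 := hμ1
    linarith
  -- covProfile is nonnegative
  have cov_nonneg : ∀ N : ℝ, 0 ≤ covProfile μ πD π N := by
    intro N
    apply Finset.sum_nonneg; intro x _
    apply Finset.sum_nonneg; intro y _
    have h0 : 0 ≤ μ x * πD x y := mul_nonneg (hμ0 x) (hπD0 x y)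
    by_cases h : N ≤ πD x y / π x y <;> simp [h, h0]
  -- the key covProfile bound from hC
  have covt : ∀ t : ℝ, 0 ≤ t → covProfile μ πD π (Real.exp t) * t ≤ C := by
    intro t ht
    have hmem : covProfile μ πD π (Real.exp t) * Real.log (Real.exp t)
        ∈ {c : ℝ | ∃ N : ℝ, 1 ≤ N ∧ c = covProfile μ πD π N * Real.log N} :=
      ⟨Real.exp t, Real.one_le_exp ht, rfl⟩
    have := hC.1 hmem
    rwa [Real.log_exp] at this
  -- C ≤ L
  have hCL : C ≤ L := by
    apply hC.2
    rintro c ⟨N, hN1, rfl⟩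
    have hlogN : 0 ≤ Real.log N := Real.log_nonneg hN1
    by_cases hcov : covProfile μ πD π N ≤ 0
    · exact (mul_nonpos_of_nonpos_of_nonneg hcov hlogN).trans hL0
    · push_neg at hcov
      obtain ⟨x, -, y, -, hterm⟩ :
          ∃ x ∈ Finset.univ, ∃ y ∈ Finset.univ,
            μ x * πD x y * (if N ≤ πD x y / π x y then (1:ℝ) else 0) ≠ 0 := by
        by_contra hall
        push_neg at hall
        have : covProfile μ πD π N = 0 := by
          unfold covProfile
          apply Finset.sum_eq_zero; intro x hx
          apply Finset.sum_eq_zero; intro y hy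
          exact not_not.1 fun h => h (hall x hx y hy)
        rw [this] at hcov; exact lt_irrefl _ hcov
      have hind : N ≤ πD x y / π x y := by
        by_contra h
        simp [h] at hterm
      have hpD : 0 < πD x y := by
        rcases (hπD0 x y).lt_or_eq with h | h
        · exact h
        · exfalso; apply hterm; rw [← h]; ring
      have hNW : N ≤ Wmax := hind.trans (hWub x y hpD)
      calc covProfile μ πD π N * Real.log N ≤ 1 * Real.log N :=
            mul_le_mul_of_nonneg_right (cov_le_one N) hlogN
        _ = Real.log N := one_mul _
        _ ≤ L := Real.log_le_log (lt_of_lt_of_le one_pos hN1) hNW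
  -- notation for the indicator and the cap function
  set g : ℝ → ℝ := fun t => if t ≤ C then 1 else C / t with hgdef
  -- Step 1: pointwise bound of KL by integrals
  have key : klDiv μ πD π ≤ ∑ x, ∑ y, μ x * πD x y *
      (∫ t in (0:ℝ)..L, (if Real.exp t ≤ πD x y / π x y then (1:ℝ) else 0)) := by
    apply Finset.sum_le_sum; intro x _
    apply Finset.sum_le_sum; intro y _
    by_cases hzero : μ x * πD x y = 0
    · rw [hzero, zero_mul, zero_mul]
    · have hμp : 0 < μ x * πD x y :=
        lt_of_le_of_ne (mul_nonneg (hμ0 x) (hπD0 x y)) (Ne.symm hzero)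
      have hpD : 0 < πD x y := by
        rcases (hπD0 x y).lt_or_eq with h | h
        · exact h
        · exfalso; apply hzero; rw [← h]; ring
      have hq : 0 < π x y := habs x y hpD
      have hwpos : 0 < πD x y / π x y := div_pos hpD hq
      have hwle : πD x y / π x y ≤ Wmax := hWub x y hpD
      have hlogle : Real.log (πD x y / π x y) ≤ L := Real.log_le_log hwpos hwle
      exact mul_le_mul_of_nonneg_left
        (log_le_integral_ind _ L hwpos hL0 hlogle) hμp.le
  -- Step 2: exchange sum and integral
  have hint : ∀ (x : X) (y : Y), IntervalIntegrable
      (fun t => μ x * πD x y * (if Real.exp t ≤ πD x y / π x y then (1:ℝ) else 0))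
      MeasureTheory.volume 0 L :=
    fun x y => (ind_intervalIntegrable _ 0 L).const_mul _
  have sumint : (∑ x, ∑ y, μ x * πD x y *
      (∫ t in (0:ℝ)..L, (if Real.exp t ≤ πD x y / π x y then (1:ℝ) else 0)))
      = ∫ t in (0:ℝ)..L, ∑ x, ∑ y, μ x * πD x y *
        (if Real.exp t ≤ πD x y / π x y then (1:ℝ) else 0) := by
    rw [intervalIntegral.integral_finset_sum
      (f := fun x t => ∑ y, μ x * πD x y * (if Real.exp t ≤ πD x y / π x y then (1:ℝ) else 0))
      (fun x _ => intervalIntegrable_sum_fun _ (fun y _ => hint x y))]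
    apply Finset.sum_congr rfl; intro x _
    rw [intervalIntegral.integral_finset_sum (fun y _ => hint x y)]
    apply Finset.sum_congr rfl; intro y _
    rw [intervalIntegral.integral_const_mul]
  -- integrability of the sum
  have hFint : IntervalIntegrable (fun t => ∑ x, ∑ y, μ x * πD x y *
      (if Real.exp t ≤ πD x y / π x y then (1:ℝ) else 0)) MeasureTheory.volume 0 L :=
    intervalIntegrable_sum_fun _ (fun x _ => intervalIntegrable_sum_fun _ (fun y _ => hint x y))
  -- integrability of g on intervals of nonnegative reals
  have hgmeas : Measurable g := by
    apply Measurable.ite (measurableSet_le measurable_id measurable_const)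
      measurable_const
    exact measurable_const.div measurable_id
  have hgint : ∀ a b : ℝ, 0 ≤ a → 0 ≤ b →
      IntervalIntegrable g MeasureTheory.volume a b := by
    intro a b ha hb
    rw [intervalIntegrable_iff]
    apply MeasureTheory.Integrable.mono'
      (g := fun _ => (1:ℝ))
      (MeasureTheory.integrableOn_const measure_Ioc_lt_top.ne)
      (hgmeas.aestronglyMeasurable.restrict)
    rw [MeasureTheory.ae_restrict_iff' measurableSet_Ioc]
    filter_upwards with t ht
    have ht0 : 0 < t := lt_of_le_of_lt (le_min ha hb) ht.1
    by_cases h : t ≤ C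
    · simp [hgdef, h]
    · push_neg at h
      have h1 : C / t ≤ 1 := (div_le_one ht0).2 h.le
      have h2 : 0 ≤ C / t := div_nonneg hC0.le ht0.le
      simp only [hgdef, if_neg (not_le.2 h)]
      rw [Real.norm_eq_abs, abs_of_nonneg h2]
      exact h1
  -- Step 3: compare integrands
  have hmono : (∫ t in (0:ℝ)..L, ∑ x, ∑ y, μ x * πD x y *
      (if Real.exp t ≤ πD x y / π x y then (1:ℝ) else 0))
      ≤ ∫ t in (0:ℝ)..L, g t := by
    apply intervalIntegral.integral_mono_on hL0 hFint (hgint 0 L le_rfl hL0)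
    intro t ht
    by_cases h : t ≤ C
    · simp only [hgdef, if_pos h]
      have h1 : (∑ x, ∑ y, μ x * πD x y *
          (if Real.exp t ≤ πD x y / π x y then (1:ℝ) else 0))
          = covProfile μ πD π (Real.exp t) := rfl
      rw [h1]
      exact cov_le_one _
    · push_neg at h
      have ht0 : 0 < t := lt_trans hC0 h
      simp only [hgdef, if_neg (not_le.2 h)]
      rw [le_div_iff₀ ht0]
      exact covt t ht.1
  -- Step 4: compute the integral of g
  have hg1 : (∫ t in (0:ℝ)..C, g t) = C := by
    rw [intervalIntegral.integral_congr (g := fun _ => (1:ℝ))]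
    · simp
    · intro t ht
      rw [Set.uIcc_of_le hC0.le] at ht
      simp [hgdef, ht.2]
  have hg2 : (∫ t in C..L, g t) = C * Real.log (L / C) := by
    rw [intervalIntegral.integral_congr_ae (g := fun t => C * t⁻¹)]
    · have h0 : (0:ℝ) ∉ Set.uIcc C L := by
        rw [Set.uIcc_of_le hCL]
        intro h
        exact absurd h.1 (not_le.2 hC0)
      rw [intervalIntegral.integral_const_mul, integral_inv h0]
    · filter_upwards with t ht
      rw [Set.uIoc_of_le hCL] at ht
      have : ¬ t ≤ C := not_le.2 ht.1
      simp [hgdef, this, div_eq_mul_inv]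
  have hgval : (∫ t in (0:ℝ)..L, g t) = C + C * Real.log (L / C) := by
    rw [← intervalIntegral.integral_add_adjacent_intervals (a := (0:ℝ)) (b := C) (c := L)
      (hgint 0 C le_rfl hC0.le) (hgint C L hC0.le hL0), hg1, hg2]
  calc klDiv μ πD π ≤ _ := key
    _ = _ := sumint
    _ ≤ ∫ t in (0:ℝ)..L, g t := hmono
    _ = C + C * Real.log (L / C) := hgval
    _ = C * (1 + Real.log (L / C)) := by ring
end

section
/- For all conditional models π_D, π : X → Δ(Y) and all N > 1, the coverage profile is bounded by the squared Hellinger distance: Pcov_N(π_D ‖ π) ≤ (2N/(√N − 1)²) · H²(π_D, π), where H²(π_D, π) := (1/2) E_{x∼μ} Σ_y (√(π_D(y|x)) − √(π(y|x)))². -/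
open scoped BigOperators Classical

/-- Squared Hellinger distance between conditional distributions, averaged over `x ∼ μ`:
`(1/2) E_{x∼μ} Σ_y (√p(y|x) − √q(y|x))²`. -/
noncomputable def hellingerSq {X Y : Type*} [Fintype X] [Fintype Y]
    (μ : X → ℝ) (p q : X → Y → ℝ) : ℝ :=
  (1 / 2) * ∑ x, μ x * ∑ y, (Real.sqrt (p x y) - Real.sqrt (q x y)) ^ 2

lemma pointwise_bound (p q N : ℝ) (hp : 0 ≤ p) (hq : 0 ≤ q) (hN : 1 < N) :
    p * (if N ≤ p / q then 1 else 0) ≤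
      (N / (Real.sqrt N - 1) ^ 2) * (Real.sqrt p - Real.sqrt q) ^ 2 := by
  have hs : 1 < Real.sqrt N := by
    rw [show (1:ℝ) = Real.sqrt 1 by simp]
    exact Real.sqrt_lt_sqrt (by norm_num) hN
  have hd : (0:ℝ) < (Real.sqrt N - 1) ^ 2 := by nlinarith
  by_cases h : N ≤ p / q
  · simp only [h, if_true, mul_one]
    have hq' : 0 < q := by
      rcases hq.lt_or_eq with h1 | h1
      · exact h1
      · exfalso; rw [← h1, div_zero] at h; linarith
    have hNq : N * q ≤ p := (le_div_iff₀ hq').mp h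
    have hN0 : (0:ℝ) < N := lt_trans one_pos hN
    have hqp : q ≤ p / N := (le_div_iff₀ hN0).mpr (by linarith [hNq] <;> ring_nf)
    have hsq : Real.sqrt q ≤ Real.sqrt p / Real.sqrt N := by
      calc Real.sqrt q ≤ Real.sqrt (p / N) := Real.sqrt_le_sqrt hqp
        _ = Real.sqrt p / Real.sqrt N := Real.sqrt_div hp N
    have hsp : 0 ≤ Real.sqrt p := Real.sqrt_nonneg p
    have hsq0 : 0 ≤ Real.sqrt q := Real.sqrt_nonneg q
    have hsN : 0 < Real.sqrt N := by linarith
    have hpp : Real.sqrt p ^ 2 = p := Real.sq_sqrt hp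
    have hNN : Real.sqrt N ^ 2 = N := Real.sq_sqrt hN0.le
    -- key: (√p - √q) ≥ √p (√N - 1)/√N ≥ 0
    have key : Real.sqrt N ^ 2 * (Real.sqrt p - Real.sqrt q) ^ 2 ≥
        Real.sqrt p ^ 2 * (Real.sqrt N - 1) ^ 2 := by
      have h1 : Real.sqrt q * Real.sqrt N ≤ Real.sqrt p :=
        (le_div_iff₀ hsN).mp hsq
      have h2 : Real.sqrt p * (Real.sqrt N - 1) ≤ Real.sqrt N * (Real.sqrt p - Real.sqrt q) := by
        nlinarith
      have h3 := mul_self_le_mul_self (by nlinarith) h2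
      nlinarith [h3]
    rw [div_mul_eq_mul_div, le_div_iff₀ hd]
    nlinarith [key]
  · simp only [h, if_false, mul_zero]
    positivity

/-- Hellinger-to-coverage conversion: for all `N > 1`,
`Pcov_N(π_D ‖ π) ≤ (2N/(√N − 1)²) · H²(π_D, π)`. -/
theorem coverage_le_hellinger {X Y : Type*} [Fintype X] [Fintype Y]
    (μ : X → ℝ) (πD π : X → Y → ℝ)
    (hμ0 : ∀ x, 0 ≤ μ x) (hμ1 : ∑ x, μ x = 1)
    (hπD0 : ∀ x y, 0 ≤ πD x y) (hπD1 : ∀ x, ∑ y, πD x y = 1)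
    (hπ0 : ∀ x y, 0 ≤ π x y) (hπ1 : ∀ x, ∑ y, π x y = 1)
    (N : ℝ) (hN : 1 < N) :
    covProfile μ πD π N ≤ (2 * N / (Real.sqrt N - 1) ^ 2) * hellingerSq μ πD π := by
  have key : covProfile μ πD π N ≤
      (N / (Real.sqrt N - 1) ^ 2) * ∑ x, μ x * ∑ y, (Real.sqrt (πD x y) - Real.sqrt (π x y)) ^ 2 := by
    unfold covProfile
    rw [Finset.mul_sum]
    apply Finset.sum_le_sum
    intro x _
    rw [mul_comm (N / (Real.sqrt N - 1) ^ 2), mul_assoc, Finset.sum_mul, Finset.mul_sum]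
    apply Finset.sum_le_sum
    intro y _
    have hpt := pointwise_bound (πD x y) (π x y) N (hπD0 x y) (hπ0 x y) hN
    calc μ x * πD x y * (if N ≤ πD x y / π x y then 1 else 0)
        = μ x * (πD x y * (if N ≤ πD x y / π x y then 1 else 0)) := by ring
      _ ≤ μ x * ((N / (Real.sqrt N - 1) ^ 2) * (Real.sqrt (πD x y) - Real.sqrt (π x y)) ^ 2) :=
          mul_le_mul_of_nonneg_left hpt (hμ0 x)
      _ = μ x * ((Real.sqrt (πD x y) - Real.sqrt (π x y)) ^ 2 * (N / (Real.sqrt N - 1) ^ 2)) := by ring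
  calc covProfile μ πD π N ≤ _ := key
    _ = (2 * N / (Real.sqrt N - 1) ^ 2) * hellingerSq μ πD π := by
        unfold hellingerSq; ring
end

section
/- Chain rule for the coverage profile: for any conditional distributions π_D, π_T, π̂ : X → Δ(Y) and any M₁, M₂ ≥ 2, Pcov_{M₁}(π_T ‖ π̂) ≤ M₂ · Pcov_{M₁/M₂}(π_D ‖ π̂) + Pcov_{M₂}(π_T ‖ π_D). -/
open scoped BigOperators Classical

/-- Coverage profile `P_{x∼μ, y∼p(·|x)}[ p(y|x)/q(y|x) > M ]`. -/
noncomputable def covProfileGT {X Y : Type*} [Fintype X] [Fintype Y]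
    (μ : X → ℝ) (p q : X → Y → ℝ) (M : ℝ) : ℝ :=
  ∑ x, ∑ y, μ x * p x y * (if M < p x y / q x y then 1 else 0)

/-- Chain rule for the coverage profile: for any `M₁, M₂ ≥ 2`,
`Pcov_{M₁}(π_T ‖ π̂) ≤ M₂ · Pcov_{M₁/M₂}(π_D ‖ π̂) + Pcov_{M₂}(π_T ‖ π_D)`. -/
theorem coverage_chain_rule {X Y : Type*} [Fintype X] [Fintype Y]
    (μ : X → ℝ) (πD πT πhat : X → Y → ℝ)
    (hμ0 : ∀ x, 0 ≤ μ x) (hμ1 : ∑ x, μ x = 1)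
    (hπD0 : ∀ x y, 0 < πD x y) (hπD1 : ∀ x, ∑ y, πD x y = 1)
    (hπT0 : ∀ x y, 0 ≤ πT x y) (hπT1 : ∀ x, ∑ y, πT x y = 1)
    (hπhat0 : ∀ x y, 0 < πhat x y) (hπhat1 : ∀ x, ∑ y, πhat x y = 1)
    (M₁ M₂ : ℝ) (hM₁ : 2 ≤ M₁) (hM₂ : 2 ≤ M₂) :
    covProfileGT μ πT πhat M₁ ≤
      M₂ * covProfileGT μ πD πhat (M₁ / M₂) + covProfileGT μ πT πD M₂ := by
  unfold covProfileGT
  rw [Finset.mul_sum, ← Finset.sum_add_distrib]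
  apply Finset.sum_le_sum
  intro x _
  rw [Finset.mul_sum, ← Finset.sum_add_distrib]
  apply Finset.sum_le_sum
  intro y _
  have hd := hπD0 x y
  have hh := hπhat0 x y
  have ha := hπT0 x y
  have hμ := hμ0 x
  have hM₂0 : (0:ℝ) < M₂ := by linarith
  by_cases h2 : M₂ < πT x y / πD x y
  · simp only [h2, if_pos, if_true]
    have h1 : (if M₁ < πT x y / πhat x y then (1:ℝ) else 0) ≤ 1 := by
      split <;> norm_num
    have hfirst : 0 ≤ M₂ * (μ x * πD x y * (if M₁ / M₂ < πD x y / πhat x y then (1:ℝ) else 0)) := by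
      have : (0:ℝ) ≤ (if M₁ / M₂ < πD x y / πhat x y then (1:ℝ) else 0) := by
        split <;> norm_num
      positivity
    nlinarith [mul_nonneg hμ ha]
  · push_neg at h2
    rw [div_le_iff₀ hd] at h2
    by_cases h1 : M₁ < πT x y / πhat x y
    · have hkey : M₁ / M₂ < πD x y / πhat x y := by
        rw [div_lt_div_iff₀ hM₂0 hh]
        rw [lt_div_iff₀ hh] at h1
        nlinarith
      simp only [h1, hkey, if_pos, if_true, not_lt.mpr h2, if_false]
      have : ¬ M₂ < πT x y / πD x y := by
        rw [not_lt, div_le_iff₀ hd]; linarith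
      simp only [this, if_false]
      nlinarith
    · simp only [h1, if_false]
      have h3 : (0:ℝ) ≤ (if M₁ / M₂ < πD x y / πhat x y then (1:ℝ) else 0) := by
        split <;> norm_num
      have h4 : (0:ℝ) ≤ (if M₂ < πT x y / πD x y then (1:ℝ) else 0) := by
        split <;> norm_num
      have := mul_nonneg (mul_nonneg hμ ha) h4
      have h5 : 0 ≤ M₂ * (μ x * πD x y * (if M₁ / M₂ < πD x y / πhat x y then (1:ℝ) else 0)) := by
        positivity
      nlinarith
end

section
/- Coverage is necessary for Best-of-N: for any conditional models π̂ and π_T and any N ≥ 2, there exists a binary reward function r(x,y) ∈ {0,1} such that E_{x∼μ}[r(x, π_T(x)) − r(x, π_BoN(x))] ≥ (1/2)·Pcov_{2N}(π_T ‖ π̂), where π_BoN samples N i.i.d. responses from π̂(·|x) and returns one maximizing r. -/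
open scoped BigOperators Classical

/-- Coverage is necessary for Best-of-N.  For a binary reward `r`, the expected reward of
the Best-of-N policy on prompt `x` equals `1 − (1 − π̂(S_x))^N` where
`S_x = {y : r x y = 1}`, so the claim reads: there exists a binary reward `r` with
`E_{x∼μ}[ E_{y∼π_T} r(x,y) − (1 − (1 − E_{y∼π̂} r(x,y))^N) ] ≥ (1/2)·Pcov_{2N}(π_T ‖ π̂)`. -/
theorem coverage_necessary_for_bon {X Y : Type*} [Fintype X] [Fintype Y]
    (μ : X → ℝ) (πhat πT : X → Y → ℝ)
    (hμ0 : ∀ x, 0 ≤ μ x) (hμ1 : ∑ x, μ x = 1)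
    (hπhat0 : ∀ x y, 0 ≤ πhat x y) (hπhat1 : ∀ x, ∑ y, πhat x y = 1)
    (hπT0 : ∀ x y, 0 ≤ πT x y) (hπT1 : ∀ x, ∑ y, πT x y = 1)
    (N : ℕ) (hN : 2 ≤ N) :
    ∃ r : X → Y → ℝ, (∀ x y, r x y = 0 ∨ r x y = 1) ∧
      ∑ x, μ x *
          ((∑ y, πT x y * r x y) - (1 - (1 - ∑ y, πhat x y * r x y) ^ N)) ≥
        (1 / 2) * covProfile μ πT πhat (2 * N) := by
  set r : X → Y → ℝ := fun x y => if (2 * N : ℝ) ≤ πT x y / πhat x y then 1 else 0 with hr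
  refine ⟨r, fun x y => by by_cases h : (2 * N : ℝ) ≤ πT x y / πhat x y <;> simp [hr, h], ?_⟩
  have hNpos : (0 : ℝ) < N := by positivity
  have h2N : (0 : ℝ) < 2 * N := by positivity
  -- rewrite covProfile
  have hcov : covProfile μ πT πhat (2 * N) = ∑ x, μ x * ∑ y, πT x y * r x y := by
    unfold covProfile
    refine Finset.sum_congr rfl fun x _ => ?_
    rw [Finset.mul_sum]
    exact Finset.sum_congr rfl fun y _ => by ring
  rw [hcov, ge_iff_le, Finset.mul_sum]
  refine Finset.sum_le_sum fun x _ => ?_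
  set a := ∑ y, πT x y * r x y with ha
  set b := ∑ y, πhat x y * r x y with hb
  have ha0 : 0 ≤ a := Finset.sum_nonneg fun y _ => by
    by_cases h : (2 * N : ℝ) ≤ πT x y / πhat x y <;> simp [hr, h, hπT0 x y]
  have hb0 : 0 ≤ b := Finset.sum_nonneg fun y _ => by
    by_cases h : (2 * N : ℝ) ≤ πT x y / πhat x y <;> simp [hr, h, hπhat0 x y]
  have hb1 : b ≤ 1 := by
    rw [hb, ← hπhat1 x]
    refine Finset.sum_le_sum fun y _ => ?_
    by_cases h : (2 * N : ℝ) ≤ πT x y / πhat x y <;> simp [hr, h, hπhat0 x y]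
  -- key: 2N * b ≤ a
  have hkey : 2 * (N : ℝ) * b ≤ a := by
    rw [ha, hb, Finset.mul_sum]
    refine Finset.sum_le_sum fun y _ => ?_
    by_cases h : (2 * N : ℝ) ≤ πT x y / πhat x y
    · simp only [hr, h, if_true, mul_one]
      rcases eq_or_lt_of_le (hπhat0 x y) with h0 | h0
      · rw [← h0, div_zero] at h; linarith
      · rw [le_div_iff₀ h0] at h
        exact h
    · simp [hr, h]
  -- Bernoulli: 1 - N*b ≤ (1-b)^N
  have hbern : 1 - (N : ℝ) * b ≤ (1 - b) ^ N := by
    have := one_add_mul_le_pow (a := -b) (by linarith) N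
    have h' : 1 + (N : ℝ) * (-b) ≤ (1 + -b) ^ N := this
    calc 1 - (N : ℝ) * b = 1 + (N : ℝ) * (-b) := by ring
      _ ≤ (1 + -b) ^ N := h'
      _ = (1 - b) ^ N := by ring_nf
  have h1 : 1 - (1 - b) ^ N ≤ (N : ℝ) * b := by linarith
  have h2 : (N : ℝ) * b ≤ a / 2 := by linarith
  have := hμ0 x
  nlinarith [mul_le_mul_of_nonneg_left (le_trans h1 h2) (hμ0 x)]
end

section
/- Weighted truncation lemma: let a₁,…,a_H, b₁,…,b_H ≥ 0 and A ≥ 0. Define weights α_h = 1 if Σ_{j≤h} a_j ≤ A; α_h = 0 if Σ_{j<h} a_j > A; and α_h = (A − Σ_{j<h} a_j)/a_h otherwise. Then α_h ∈ [0,1] for all h, Σ_h α_h a_h = min{A, Σ_h a_h}, and with F(a,b) := |a−b| − a/2: (i) min{A, Σ_h a_h} ≤ 2·min{A, Σ_h b_h} + 2·Σ_h α_h F(a_h, b_h), and (ii) min{A, Σ_h b_h} ≤ 2·min{A, Σ_h a_h} + Σ_h α_h F(a_h, b_h). -/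
open scoped BigOperators Classical

/-- Weighted truncation lemma: with `a, b ≥ 0`, `A ≥ 0`, weights
`α_h = 1` if `Σ_{j≤h} a_j ≤ A`, `α_h = 0` if `Σ_{j<h} a_j > A`, and
`α_h = (A − Σ_{j<h} a_j)/a_h` otherwise, one has `α_h ∈ [0,1]`,
`Σ_h α_h a_h = min{A, Σ_h a_h}`, and with `F(a,b) = |a−b| − a/2`:
(i) `min{A, Σ a} ≤ 2 min{A, Σ b} + 2 Σ α_h F(a_h,b_h)` and
(ii) `min{A, Σ b} ≤ 2 min{A, Σ a} + Σ α_h F(a_h,b_h)`. -/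
theorem weighted_truncation {H : ℕ} (a b : Fin H → ℝ) (A : ℝ)
    (ha : ∀ h, 0 ≤ a h) (hb : ∀ h, 0 ≤ b h) (hA : 0 ≤ A)
    (α : Fin H → ℝ)
    (hα : ∀ h, α h =
      if (∑ j ∈ Finset.Iic h, a j) ≤ A then 1
      else if A < ∑ j ∈ Finset.Iio h, a j then 0
      else (A - ∑ j ∈ Finset.Iio h, a j) / a h) :
    (∀ h, 0 ≤ α h ∧ α h ≤ 1) ∧
    (∑ h, α h * a h) = min A (∑ h, a h) ∧
    min A (∑ h, a h) ≤
      2 * min A (∑ h, b h) + 2 * ∑ h, α h * (|a h - b h| - a h / 2) ∧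
    min A (∑ h, b h) ≤
      2 * min A (∑ h, a h) + ∑ h, α h * (|a h - b h| - a h / 2) := by
  classical
  -- split of Iic into Iio plus the point
  have hsplit : ∀ h : Fin H, (∑ j ∈ Finset.Iic h, a j) =
      (∑ j ∈ Finset.Iio h, a j) + a h := by
    intro h
    rw [← Finset.Iio_insert, Finset.sum_insert (by simp), add_comm]
  -- bounds on α
  have hbound : ∀ h, 0 ≤ α h ∧ α h ≤ 1 := by
    intro h
    rw [hα h]
    split_ifs with h1 h2
    · norm_num
    · norm_num
    · push_neg at h1 h2
      have hpos : 0 < a h := by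
        have := hsplit h; nlinarith
      constructor
      · exact div_nonneg (by linarith) hpos.le
      · rw [div_le_one hpos]
        have := hsplit h; linarith
  -- nonneg extension to ℕ
  set a' : ℕ → ℝ := fun n => if hn : n < H then a ⟨n, hn⟩ else 0 with ha'
  have ha'val : ∀ h : Fin H, a' h.val = a h := by
    intro h; simp [ha', h.isLt]
  have hIio : ∀ h : Fin H, (∑ j ∈ Finset.Iio h, a j) =
      ∑ n ∈ Finset.range h.val, a' n := by
    intro h
    rw [← Nat.Iio_eq_range, ← Fin.map_valEmbedding_Iio, Finset.sum_map]
    refine Finset.sum_congr rfl fun j _ => ?_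
    simp [ha', j.isLt]
  have hfin : (∑ h, a h) = ∑ n ∈ Finset.range H, a' n := by
    rw [← Fin.sum_univ_eq_sum_range]
    exact Finset.sum_congr rfl fun j _ => (ha'val j).symm
  set g : ℕ → ℝ := fun n => min A (∑ j ∈ Finset.range n, a' j) with hg
  -- telescoping identity
  have htele : ∀ h : Fin H, α h * a h = g (h.val + 1) - g h.val := by
    intro h
    have hIic' : (∑ j ∈ Finset.Iic h, a j) = ∑ n ∈ Finset.range (h.val + 1), a' n := by
      rw [hsplit h, hIio h, Finset.sum_range_succ, ha'val h]
    have hg1 : g (h.val + 1) = min A (∑ j ∈ Finset.Iic h, a j) := by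
      rw [hg, hIic']
    have hg0 : g h.val = min A (∑ j ∈ Finset.Iio h, a j) := by
      rw [hg, hIio h]
    rw [hα h, hg1, hg0]
    split_ifs with h1 h2
    · rw [min_eq_right h1, min_eq_right (by have := hsplit h; linarith [ha h])]
      have := hsplit h; linarith
    · rw [min_eq_left (le_of_lt h2),
        min_eq_left (by have := hsplit h; linarith [ha h] : A ≤ ∑ j ∈ Finset.Iic h, a j)]
      ring
    · push_neg at h1 h2
      have hpos : 0 < a h := by have := hsplit h; nlinarith
      rw [min_eq_left h1.le, min_eq_right h2, div_mul_cancel₀ _ hpos.ne']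
  have hsum : (∑ h, α h * a h) = min A (∑ h, a h) := by
    have : (∑ h, α h * a h) = ∑ n ∈ Finset.range H, (g (n + 1) - g n) := by
      rw [← Fin.sum_univ_eq_sum_range (fun n => g (n + 1) - g n) H]
      exact Finset.sum_congr rfl fun h _ => htele h
    rw [this, Finset.sum_range_sub g, hg]
    simp [min_eq_right hA, hfin]
  refine ⟨hbound, hsum, ?_⟩
  -- rewrite the F-sum
  have hF : (∑ h, α h * (|a h - b h| - a h / 2)) =
      (∑ h, α h * |a h - b h|) - (∑ h, α h * a h) / 2 := by
    rw [Finset.sum_div, ← Finset.sum_sub_distrib]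
    exact Finset.sum_congr rfl fun h _ => by ring
  set X := ∑ h, α h * |a h - b h| with hX
  have hXnn : 0 ≤ X := Finset.sum_nonneg fun h _ =>
    mul_nonneg (hbound h).1 (abs_nonneg _)
  -- key claim
  have hC : (∑ h, α h * a h) - X ≤ min A (∑ h, b h) := by
    have heq : (∑ h, α h * a h) - X = ∑ h, α h * (a h - |a h - b h|) := by
      rw [hX, ← Finset.sum_sub_distrib]
      exact Finset.sum_congr rfl fun h _ => by ring
    rw [heq]
    refine le_min ?_ ?_
    · calc (∑ h, α h * (a h - |a h - b h|)) ≤ ∑ h, α h * a h :=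
            Finset.sum_le_sum fun h _ =>
              mul_le_mul_of_nonneg_left (by linarith [abs_nonneg (a h - b h)]) (hbound h).1
        _ = min A (∑ h, a h) := hsum
        _ ≤ A := min_le_left _ _
    · refine Finset.sum_le_sum fun h _ => ?_
      have hx : a h - |a h - b h| ≤ b h := by
        cases abs_cases (a h - b h) <;> linarith [hb h]
      nlinarith [(hbound h).1, (hbound h).2, hb h,
        mul_nonneg (hbound h).1 (sub_nonneg.2 hx),
        mul_nonneg (sub_nonneg.2 (hbound h).2) (hb h)]
  rw [hF, hsum] at *
  constructor
  · linarith [min_le_left A (∑ h, b h)]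
  · rcases le_total (∑ h, a h) A with hcase | hcase
    · -- all weights are 1
      have hone : ∀ h, α h = 1 := by
        intro h
        rw [hα h, if_pos]
        calc (∑ j ∈ Finset.Iic h, a j) ≤ ∑ j, a j :=
              Finset.sum_le_sum_of_subset_of_nonneg (Finset.subset_univ _)
                (fun j _ _ => ha j)
          _ ≤ A := hcase
      have hXlb : (∑ h, b h) - (∑ h, a h) ≤ X := by
        rw [hX, ← Finset.sum_sub_distrib]
        refine Finset.sum_le_sum fun h _ => ?_
        rw [hone h, one_mul, abs_sub_comm]
        linarith [le_abs_self (b h - a h)]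
      have hmin : min A (∑ h, a h) = ∑ h, a h := min_eq_right hcase
      have hsa : 0 ≤ ∑ h, a h := Finset.sum_nonneg fun h _ => ha h
      rw [hmin]
      linarith [min_le_right A (∑ h, b h)]
    · have hmin : min A (∑ h, a h) = A := min_eq_left hcase
      rw [hmin]
      linarith [min_le_left A (∑ h, b h)]
end

section
/- For a nonnegative random variable Z with finite second moment and E[Z] > 0, E[√Z] ≥ √(E[Z]) · (1 − Var[Z]/(2·E[Z]²)). -/
open scoped BigOperators Classical

lemma sqrt_ge_aux (u : ℝ) (hu : 0 ≤ u) : (3 * u - u ^ 2) / 2 ≤ Real.sqrt u := by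
  have hs : 0 ≤ Real.sqrt u := Real.sqrt_nonneg u
  have hsq : Real.sqrt u ^ 2 = u := Real.sq_sqrt hu
  nlinarith [sq_nonneg (Real.sqrt u - 1), sq_nonneg (Real.sqrt u * (Real.sqrt u - 1))]

/-- For a nonnegative random variable `Z` (on a finite probability space) with
`E[Z] > 0`, `E[√Z] ≥ √(E[Z]) · (1 − Var[Z]/(2 E[Z]²))`. -/
theorem exp_sqrt_ge {Ω : Type*} [Fintype Ω] (P : Ω → ℝ) (Z : Ω → ℝ)
    (hP0 : ∀ ω, 0 ≤ P ω) (hP1 : ∑ ω, P ω = 1)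
    (hZ : ∀ ω, 0 ≤ Z ω) (hEZ : 0 < ∑ ω, P ω * Z ω) :
    (∑ ω, P ω * Real.sqrt (Z ω)) ≥
      Real.sqrt (∑ ω, P ω * Z ω) *
        (1 - (∑ ω, P ω * (Z ω - ∑ ω', P ω' * Z ω') ^ 2) /
          (2 * (∑ ω, P ω * Z ω) ^ 2)) := by
  set m : ℝ := ∑ ω, P ω * Z ω with hm
  have hm0 : 0 < m := hEZ
  have hmne : m ≠ 0 := ne_of_gt hm0
  set S2 : ℝ := ∑ ω, P ω * Z ω ^ 2 with hS2
  -- variance identity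
  have hvar : (∑ ω, P ω * (Z ω - m) ^ 2) = S2 - m ^ 2 := by
    have : ∀ ω, P ω * (Z ω - m) ^ 2
        = P ω * Z ω ^ 2 - (2 * m) * (P ω * Z ω) + m ^ 2 * P ω := by
      intro ω; ring
    rw [Finset.sum_congr rfl (fun ω _ => this ω)]
    rw [Finset.sum_add_distrib, Finset.sum_sub_distrib, ← Finset.mul_sum,
      ← Finset.mul_sum, hP1, ← hm]
    ring
  have hsm : 0 ≤ Real.sqrt m := Real.sqrt_nonneg m
  -- pointwise bound and sum
  have key : (∑ ω, P ω * Real.sqrt (Z ω)) ≥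
      ∑ ω, ((Real.sqrt m * 3 / (2 * m)) * (P ω * Z ω)
        - (Real.sqrt m / (2 * m ^ 2)) * (P ω * Z ω ^ 2)) := by
    apply Finset.sum_le_sum
    intro ω _
    have hsz : Real.sqrt (Z ω) = Real.sqrt m * Real.sqrt (Z ω / m) := by
      rw [← Real.sqrt_mul (le_of_lt hm0)]
      congr 1
      field_simp
    have hu : 0 ≤ Z ω / m := div_nonneg (hZ ω) (le_of_lt hm0)
    have h1 := sqrt_ge_aux (Z ω / m) hu
    have h2 : Real.sqrt m * ((3 * (Z ω / m) - (Z ω / m) ^ 2) / 2)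
        ≤ Real.sqrt m * Real.sqrt (Z ω / m) := by
      exact mul_le_mul_of_nonneg_left h1 hsm
    have h3 : P ω * (Real.sqrt m * ((3 * (Z ω / m) - (Z ω / m) ^ 2) / 2))
        ≤ P ω * Real.sqrt (Z ω) := by
      rw [hsz]; exact mul_le_mul_of_nonneg_left h2 (hP0 ω)
    calc (Real.sqrt m * 3 / (2 * m)) * (P ω * Z ω)
          - (Real.sqrt m / (2 * m ^ 2)) * (P ω * Z ω ^ 2)
        = P ω * (Real.sqrt m * ((3 * (Z ω / m) - (Z ω / m) ^ 2) / 2)) := by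
          field_simp
      _ ≤ P ω * Real.sqrt (Z ω) := h3
  have hsum : (∑ ω, ((Real.sqrt m * 3 / (2 * m)) * (P ω * Z ω)
        - (Real.sqrt m / (2 * m ^ 2)) * (P ω * Z ω ^ 2)))
      = (Real.sqrt m * 3 / (2 * m)) * m - (Real.sqrt m / (2 * m ^ 2)) * S2 := by
    rw [Finset.sum_sub_distrib, ← Finset.mul_sum, ← Finset.mul_sum, ← hm, ← hS2]
  rw [hvar]
  have : Real.sqrt m * (1 - (S2 - m ^ 2) / (2 * m ^ 2))
      = (Real.sqrt m * 3 / (2 * m)) * m - (Real.sqrt m / (2 * m ^ 2)) * S2 := by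
    field_simp; ring
  rw [this, ← hsum]
  exact key
end

section
/- Uniform one-sided concentration for log-likelihood ratios: let μ be a distribution over Z and F a class of functions Z → ℝ with sup-norm covering number N_∞(F, ε). If Z⁽¹⁾,…,Z⁽ⁿ⁾ are i.i.d. from μ, then with probability at least 1−δ, simultaneously for all f ∈ F: Σ_{i=1}^n f(Z⁽ⁱ⁾) ≤ n·log E_μ[exp(f(Z))] + log(1/δ) + inf_{ε ≥ 0} { log N_∞(F, ε) + 2nε }. -/
open scoped BigOperators Classical

lemma pi_sum_prod {Z : Type*} [Fintype Z] (n : ℕ) (g : Z → ℝ) :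
    ∑ D : Fin n → Z, ∏ i, g (D i) = (∑ z, g z) ^ n := by
  rw [← Fintype.piFinset_univ, ← Finset.prod_univ_sum]
  simp

lemma chernoff_step {Z : Type*} [Fintype Z] (μ : Z → ℝ) (hμ0 : ∀ z, 0 ≤ μ z)
    (n : ℕ) (f' : Z → ℝ) (a : ℝ) :
    ∑ D : Fin n → Z, (∏ i, μ (D i)) * (if a < ∑ i, f' (D i) then (1:ℝ) else 0)
      ≤ Real.exp (-a) * (∑ z, μ z * Real.exp (f' z)) ^ n := by
  have key : ∀ D : Fin n → Z,
      (∏ i, μ (D i)) * (if a < ∑ i, f' (D i) then (1:ℝ) else 0)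
        ≤ (∏ i, μ (D i)) * Real.exp (∑ i, f' (D i) - a) := by
    intro D
    apply mul_le_mul_of_nonneg_left _ (Finset.prod_nonneg fun i _ => hμ0 _)
    split_ifs with h
    · calc (1:ℝ) = Real.exp 0 := Real.exp_zero.symm
        _ ≤ _ := Real.exp_le_exp.mpr (by linarith)
    · positivity
  calc ∑ D : Fin n → Z, (∏ i, μ (D i)) * (if a < ∑ i, f' (D i) then (1:ℝ) else 0)
      ≤ ∑ D : Fin n → Z, (∏ i, μ (D i)) * Real.exp (∑ i, f' (D i) - a) :=
        Finset.sum_le_sum fun D _ => key D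
    _ = Real.exp (-a) * ∑ D : Fin n → Z, ∏ i, (μ (D i) * Real.exp (f' (D i))) := by
        rw [Finset.mul_sum]
        refine Finset.sum_congr rfl fun D _ => ?_
        rw [sub_eq_add_neg, Real.exp_add, Real.exp_sum, Finset.prod_mul_distrib]
        ring
    _ = Real.exp (-a) * (∑ z, μ z * Real.exp (f' z)) ^ n := by
        rw [pi_sum_prod n (fun z => μ z * Real.exp (f' z))]

set_option maxHeartbeats 1000000

/-- Uniform one-sided concentration for empirical log-MGF-type sums: if `Ncov ε`
bounds the sup-norm covering number of `F` at every scale `ε ≥ 0`, then with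
probability at least `1−δ` over an i.i.d. sample `Z⁽¹⁾,…,Z⁽ⁿ⁾ ∼ μ`, simultaneously
for all `f ∈ F` and all `ε ≥ 0`,
`Σᵢ f(Z⁽ⁱ⁾) ≤ n log E_μ[exp f] + log(1/δ) + log Ncov(ε) + 2nε`
(i.e., the bound holds with `inf_{ε≥0}{log Ncov(ε) + 2nε}`). -/
theorem uniform_one_sided_concentration {Z : Type*} [Fintype Z]
    (μ : Z → ℝ) (hμ0 : ∀ z, 0 ≤ μ z) (hμ1 : ∑ z, μ z = 1)
    (F : Set (Z → ℝ)) (Ncov : ℝ → ℕ)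
    (hNcov : ∀ ε : ℝ, 0 ≤ ε → ∃ F' : Finset (Z → ℝ), F'.card ≤ Ncov ε ∧
      ∀ f ∈ F, ∃ f' ∈ F', ∀ z, |f z - f' z| ≤ ε)
    (n : ℕ) (hn : 1 ≤ n) (δ : ℝ) (hδ0 : 0 < δ) (hδ1 : δ < 1) :
    (∑ D : Fin n → Z, (∏ i, μ (D i)) *
        (if ∀ f ∈ F, ∀ ε : ℝ, 0 ≤ ε →
            (∑ i, f (D i)) ≤ n * Real.log (∑ z, μ z * Real.exp (f z)) +
              Real.log (1 / δ) + Real.log (Ncov ε) + 2 * n * ε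
          then 1 else 0)) ≥ 1 - δ := by
  classical
  have hw0 : ∀ D : Fin n → Z, 0 ≤ ∏ i, μ (D i) :=
    fun D => Finset.prod_nonneg fun i _ => hμ0 _
  have hwsum : ∑ D : Fin n → Z, ∏ i, μ (D i) = 1 := by
    rw [pi_sum_prod n μ, hμ1, one_pow]
  have hMpos : ∀ f : Z → ℝ, 0 < ∑ z, μ z * Real.exp (f z) := by
    intro f
    obtain ⟨z0, hz0⟩ : ∃ z, 0 < μ z := by
      by_contra h
      push_neg at h
      have : ∑ z, μ z = 0 := le_antisymm (Finset.sum_nonpos fun z _ => h z)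
        (Finset.sum_nonneg fun z _ => hμ0 z)
      rw [hμ1] at this; norm_num at this
    exact Finset.sum_pos' (fun z _ => mul_nonneg (hμ0 z) (Real.exp_pos _).le)
      ⟨z0, Finset.mem_univ z0, mul_pos hz0 (Real.exp_pos _)⟩
  set P : (Fin n → Z) → Prop := fun D => ∀ f ∈ F, ∀ ε : ℝ, 0 ≤ ε →
      (∑ i, f (D i)) ≤ n * Real.log (∑ z, μ z * Real.exp (f z)) +
        Real.log (1 / δ) + Real.log (Ncov ε) + 2 * n * ε with hP
  set B : Finset (Fin n → Z) := Finset.univ.filter (fun D => ¬ P D) with hB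
  have hsplit : ∑ D : Fin n → Z, (∏ i, μ (D i)) * (if P D then (1:ℝ) else 0)
      = 1 - ∑ D ∈ B, ∏ i, μ (D i) := by
    have h1 : ∀ D : Fin n → Z, (∏ i, μ (D i)) * (if P D then (1:ℝ) else 0)
        = (∏ i, μ (D i)) - (if ¬ P D then (∏ i, μ (D i)) else 0) := by
      intro D; split_ifs with h h2 <;> simp_all <;> ring
    rw [Finset.sum_congr rfl fun D _ => h1 D, Finset.sum_sub_distrib, hwsum,
      hB, Finset.sum_filter]
  rw [hsplit]
  have hBsum : ∑ D ∈ B, ∏ i, μ (D i) ≤ δ := by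
    rcases B.eq_empty_or_nonempty with hBe | hBne
    · rw [hBe]; simp; linarith
    · have hbad : ∀ D ∈ B, ∃ f ∈ F, ∃ ε : ℝ, 0 ≤ ε ∧
          n * Real.log (∑ z, μ z * Real.exp (f z)) +
            Real.log (1 / δ) + Real.log (Ncov ε) + 2 * n * ε < ∑ i, f (D i) := by
        intro D hD
        rw [hB, Finset.mem_filter] at hD
        have h2 := hD.2
        simp only [hP] at h2
        push_neg at h2
        obtain ⟨f, hf, ε, hε, hlt⟩ := h2
        exact ⟨f, hf, ε, hε, hlt⟩
      have hexists : ∃ ε' : ℝ, 0 ≤ ε' ∧ ∀ D ∈ B, ∃ f ∈ F,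
          n * Real.log (∑ z, μ z * Real.exp (f z)) +
            Real.log (1 / δ) + Real.log (Ncov ε') + 2 * n * ε' < ∑ i, f (D i) := by
        choose fD hfDF εD hεD0 hεDlt using hbad
        obtain ⟨x0, -, hx0⟩ := Finset.exists_min_image B.attach
          (fun x => Real.log (Ncov (εD x.1 x.2)) + 2 * n * (εD x.1 x.2))
          (hBne.attach)
        refine ⟨εD x0.1 x0.2, hεD0 _ _, fun D hD => ⟨fD D hD, hfDF D hD, ?_⟩⟩
        have h1 := hεDlt D hD
        have h2 := hx0 ⟨D, hD⟩ (Finset.mem_attach _ _)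
        simp only at h2
        linarith
      obtain ⟨ε', hε'0, hbad'⟩ := hexists
      obtain ⟨F', hcard, hcover⟩ := hNcov ε' hε'0
      obtain ⟨D1, hD1⟩ := hBne
      obtain ⟨fone, hfoneF, -⟩ := hbad' D1 hD1
      obtain ⟨f1', hf1', -⟩ := hcover fone hfoneF
      have hN1 : 1 ≤ Ncov ε' := le_trans (Finset.card_pos.mpr ⟨f1', hf1'⟩) hcard
      have hNpos : (0:ℝ) < (Ncov ε' : ℝ) := by exact_mod_cast hN1
      have hbadcov : ∀ D ∈ B, ∃ f' ∈ F',
          n * Real.log (∑ z, μ z * Real.exp (f' z)) +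
            Real.log (1 / δ) + Real.log (Ncov ε') < ∑ i, f' (D i) := by
        intro D hD
        obtain ⟨f, hfF, hlt⟩ := hbad' D hD
        obtain ⟨f', hf'F', hdist⟩ := hcover f hfF
        refine ⟨f', hf'F', ?_⟩
        have hsum : ∑ i, f (D i) ≤ (∑ i, f' (D i)) + n * ε' := by
          have h3 : ∑ i, f (D i) ≤ ∑ i, (f' (D i) + ε') := by
            refine Finset.sum_le_sum fun i _ => ?_
            have h4 := abs_le.mp (hdist (D i))
            linarith [h4.1]
          simpa [Finset.sum_add_distrib, Finset.card_univ, mul_comm] using h3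
        have hMGF : Real.log (∑ z, μ z * Real.exp (f' z))
            ≤ Real.log (∑ z, μ z * Real.exp (f z)) + ε' := by
          have hle : ∑ z, μ z * Real.exp (f' z)
              ≤ Real.exp ε' * ∑ z, μ z * Real.exp (f z) := by
            rw [Finset.mul_sum]
            refine Finset.sum_le_sum fun z _ => ?_
            have h1 := abs_le.mp (hdist z)
            have h2 : Real.exp (f' z) ≤ Real.exp (f z + ε') :=
              Real.exp_le_exp.mpr (by linarith [h1.2])
            rw [Real.exp_add] at h2
            calc μ z * Real.exp (f' z) ≤ μ z * (Real.exp (f z) * Real.exp ε') :=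
                mul_le_mul_of_nonneg_left h2 (hμ0 z)
              _ = Real.exp ε' * (μ z * Real.exp (f z)) := by ring
          calc Real.log (∑ z, μ z * Real.exp (f' z))
              ≤ Real.log (Real.exp ε' * ∑ z, μ z * Real.exp (f z)) :=
                Real.log_le_log (hMpos f') hle
            _ = Real.log (∑ z, μ z * Real.exp (f z)) + ε' := by
                rw [Real.log_mul (Real.exp_ne_zero _) (ne_of_gt (hMpos f)), Real.log_exp]
                ring
        have h3 : (n:ℝ) * Real.log (∑ z, μ z * Real.exp (f' z))
            ≤ (n:ℝ) * (Real.log (∑ z, μ z * Real.exp (f z)) + ε') :=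
          mul_le_mul_of_nonneg_left hMGF (Nat.cast_nonneg n)
        rw [mul_add] at h3
        linarith
      have hind : ∀ D ∈ B, (1:ℝ) ≤ ∑ f' ∈ F',
          (if n * Real.log (∑ z, μ z * Real.exp (f' z)) +
              Real.log (1 / δ) + Real.log (Ncov ε') < ∑ i, f' (D i) then (1:ℝ) else 0) := by
        intro D hD
        obtain ⟨f', hf'F', hlt⟩ := hbadcov D hD
        have hmem : f' ∈ F'.filter (fun g => n * Real.log (∑ z, μ z * Real.exp (g z)) +
            Real.log (1 / δ) + Real.log (Ncov ε') < ∑ i, g (D i)) :=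
          Finset.mem_filter.mpr ⟨hf'F', hlt⟩
        rw [Finset.sum_boole]
        have hpos := Finset.card_pos.mpr ⟨f', hmem⟩
        exact_mod_cast hpos
      calc ∑ D ∈ B, ∏ i, μ (D i)
          ≤ ∑ D ∈ B, (∏ i, μ (D i)) * ∑ f' ∈ F',
            (if n * Real.log (∑ z, μ z * Real.exp (f' z)) +
                Real.log (1 / δ) + Real.log (Ncov ε') < ∑ i, f' (D i) then (1:ℝ) else 0) := by
            refine Finset.sum_le_sum fun D hD => ?_
            calc ∏ i, μ (D i) = (∏ i, μ (D i)) * 1 := (mul_one _).symm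
              _ ≤ _ := mul_le_mul_of_nonneg_left (hind D hD) (hw0 D)
        _ ≤ ∑ D : Fin n → Z, (∏ i, μ (D i)) * ∑ f' ∈ F',
            (if n * Real.log (∑ z, μ z * Real.exp (f' z)) +
                Real.log (1 / δ) + Real.log (Ncov ε') < ∑ i, f' (D i) then (1:ℝ) else 0) := by
            refine Finset.sum_le_sum_of_subset_of_nonneg (Finset.subset_univ _)
              (fun D _ _ => mul_nonneg (hw0 D)
                (Finset.sum_nonneg fun g _ => by split_ifs <;> norm_num))
        _ = ∑ f' ∈ F', ∑ D : Fin n → Z, (∏ i, μ (D i)) *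
            (if n * Real.log (∑ z, μ z * Real.exp (f' z)) +
                Real.log (1 / δ) + Real.log (Ncov ε') < ∑ i, f' (D i) then (1:ℝ) else 0) := by
            simp_rw [Finset.mul_sum]
            rw [Finset.sum_comm]
        _ ≤ ∑ _f' ∈ F', δ / (Ncov ε' : ℝ) := by
            refine Finset.sum_le_sum fun f' _ => ?_
            have hch := chernoff_step μ hμ0 n f'
              (n * Real.log (∑ z, μ z * Real.exp (f' z)) +
                Real.log (1 / δ) + Real.log (Ncov ε'))
            have heval : Real.exp (-(n * Real.log (∑ z, μ z * Real.exp (f' z)) +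
                  Real.log (1 / δ) + Real.log (Ncov ε'))) *
                (∑ z, μ z * Real.exp (f' z)) ^ n = δ / (Ncov ε' : ℝ) := by
              have hexp : Real.exp (↑n * Real.log (∑ z, μ z * Real.exp (f' z)) +
                  Real.log (1 / δ) + Real.log (Ncov ε'))
                  = (∑ z, μ z * Real.exp (f' z)) ^ n * (1 / δ) * (Ncov ε' : ℝ) := by
                rw [Real.exp_add, Real.exp_add, ← Real.log_pow,
                  Real.exp_log (pow_pos (hMpos f') n),
                  Real.exp_log (by positivity : (0:ℝ) < 1 / δ),
                  Real.exp_log hNpos]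
              rw [Real.exp_neg, hexp]
              have hMn : (∑ z, μ z * Real.exp (f' z)) ^ n ≠ 0 :=
                ne_of_gt (pow_pos (hMpos f') n)
              field_simp
            exact le_of_le_of_eq hch heval
        _ = F'.card * (δ / (Ncov ε' : ℝ)) := by rw [Finset.sum_const, nsmul_eq_mul]
        _ ≤ (Ncov ε' : ℝ) * (δ / (Ncov ε' : ℝ)) := by
            refine mul_le_mul_of_nonneg_right ?_ (by positivity)
            exact_mod_cast hcard
        _ = δ := by field_simp
  linarith
end

section
/- Misspecified MLE failure: for any α ∈ [0,1] and M > e^α, there exists a data distribution π_D and a two-element class Π = {π₁, π₂} such that sup_{x,y}|log π_D(y|x) − log π₁(y|x)| ≤ α, the coverage profile Pcov_M(π_D ‖ π₂) ≥ c·α²/log M for an absolute constant c > 0, and for every sample size n ≥ 1, with probability at least 1/4 the maximum likelihood estimator over Π equals π₂. -/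
open scoped BigOperators Classical
open Finset

namespace MLEFail

abbrev C := Bool × Bool

lemma prod_if_single {M : Type*} [CommMonoid M] {n : ℕ} (i₀ : Fin n) (f g : Fin n → M) :
    (∏ i, (if i = i₀ then f i else g i)) = f i₀ * ∏ i ∈ univ.erase i₀, g i := by
  classical
  calc (∏ i, (if i = i₀ then f i else g i))
      = (if i₀ = i₀ then f i₀ else g i₀) * ∏ i ∈ univ.erase i₀, (if i = i₀ then f i else g i) :=
        (Finset.mul_prod_erase univ _ (mem_univ i₀)).symm
  _ = f i₀ * ∏ i ∈ univ.erase i₀, g i := by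
      rw [if_pos rfl]
      congr 1
      refine Finset.prod_congr rfl (fun i hi => ?_)
      rw [if_neg (Finset.ne_of_mem_erase hi)]

lemma sum_prod_one (n : ℕ) (w : C → ℝ) (hw : ∑ c, w c = 1) :
    ∑ D : Fin n → C, ∏ i, w (D i) = 1 := by
  classical
  have h := Finset.prod_univ_sum (fun _ : Fin n => (univ : Finset C)) (fun _ c => w c)
  rw [Fintype.piFinset_univ] at h
  calc ∑ D : Fin n → C, ∏ i, w (D i) = ∏ _i : Fin n, ∑ c, w c := h.symm
  _ = 1 := by rw [hw]; simp

lemma sum_prod_single (n : ℕ) (w g : C → ℝ) (hw : ∑ c, w c = 1) (i₀ : Fin n) :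
    ∑ D : Fin n → C, (∏ i, w (D i)) * g (D i₀) = ∑ c, w c * g c := by
  classical
  have key : ∀ D : Fin n → C, (∏ i, w (D i)) * g (D i₀)
      = ∏ i, (if i = i₀ then w (D i) * g (D i) else w (D i)) := by
    intro D
    rw [prod_if_single i₀ (fun i => w (D i) * g (D i)) (fun i => w (D i))]
    rw [← Finset.mul_prod_erase univ (fun i => w (D i)) (mem_univ i₀)]
    ring
  rw [Finset.sum_congr rfl (fun D _ => key D)]
  have h := Finset.prod_univ_sum (fun _ : Fin n => (univ : Finset C))
    (fun i c => if i = i₀ then w c * g c else w c)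
  rw [Fintype.piFinset_univ] at h
  rw [← h]
  have h2 : ∀ i : Fin n, (∑ c, (if i = i₀ then w c * g c else w c))
      = (if i = i₀ then (∑ c, w c * g c) else 1) := by
    intro i
    by_cases hi : i = i₀
    · simp [hi]
    · simp only [if_neg hi]; exact hw
  rw [Finset.prod_congr rfl (fun i _ => h2 i)]
  rw [prod_if_single i₀ (fun _ => (∑ c, w c * g c)) (fun _ => (1:ℝ))]
  rw [Finset.prod_const_one, mul_one]

lemma sum_prod_count (n : ℕ) (w g : C → ℝ) (hw : ∑ c, w c = 1) :
    ∑ D : Fin n → C, (∏ i, w (D i)) * (∑ i, g (D i)) = n * ∑ c, w c * g c := by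
  classical
  have h : ∀ D : Fin n → C, (∏ i, w (D i)) * (∑ i, g (D i))
      = ∑ i, (∏ i', w (D i')) * g (D i) := fun D => Finset.mul_sum _ _ _
  rw [Finset.sum_congr rfl (fun D _ => h D), Finset.sum_comm]
  rw [Finset.sum_congr rfl (fun i _ => sum_prod_single n w g hw i)]
  simp [Finset.sum_const, Finset.card_univ, nsmul_eq_mul]

set_option maxHeartbeats 1000000 in
/-- The core probability lemma. -/
lemma prob_main (z1 z0 ε Λ d zneg : ℝ)
    (hz : z1 + z0 = -ε) (hε : 0 < ε) (hΛ : 0 < Λ) (hzneg : zneg ≤ 0)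
    (hd0 : 0 ≤ d) (hd1 : d ≤ 1) (hdΛ : 4 * (d * Λ) ≤ ε)
    (n : ℕ) (hn : 1 ≤ n) :
    1/4 ≤ ∑ D : Fin n → C,
      (∏ i, (fun c : C => if c.1 then (15/32 : ℝ) else if c.2 then d/16 else (1-d)/16) (D i)) *
        (if (∑ i, (fun c : C => if c.1 then (if c.2 then z1 else z0) else (if c.2 then Λ else zneg)) (D i)) ≤ 0
          then 1 else 0) := by
  classical
  set w : C → ℝ := fun c => if c.1 then (15/32 : ℝ) else if c.2 then d/16 else (1-d)/16 with hwdef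
  set Z : C → ℝ := fun c => if c.1 then (if c.2 then z1 else z0) else (if c.2 then Λ else zneg) with hZdef
  have hw0 : ∀ c : C, 0 ≤ w c := by
    rintro ⟨x, y⟩; cases x <;> cases y <;> simp [hwdef] <;> linarith
  have hw1 : ∑ c, w c = 1 := by
    rw [Fintype.sum_prod_type]
    rw [Fintype.sum_bool]
    rw [Fintype.sum_bool, Fintype.sum_bool]
    simp [hwdef]
    ring
  set W : (Fin n → C) → ℝ := fun D => ∏ i, w (D i) with hWdef
  have hW0 : ∀ D, 0 ≤ W D := fun D => Finset.prod_nonneg (fun i _ => hw0 _)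
  have hWsum : ∑ D : Fin n → C, W D = 1 := sum_prod_one n w hw1
  set jf : C → ℝ := fun c => if c.1 then 0 else 1 with hjfdef
  set kf : C → ℝ := fun c => if c.1 then 0 else if c.2 then 1 else 0 with hkfdef
  set cf : C → ℝ := fun c => if c.1 then Z c else 0 with hcfdef
  have hjf0 : ∀ c, 0 ≤ jf c := by rintro ⟨x, y⟩; cases x <;> simp [hjfdef]
  have hkf0 : ∀ c, 0 ≤ kf c := by rintro ⟨x, y⟩; cases x <;> cases y <;> simp [hkfdef]
  set J : (Fin n → C) → ℝ := fun D => ∑ i, jf (D i) with hJdef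
  set K : (Fin n → C) → ℝ := fun D => ∑ i, kf (D i) with hKdef
  set Co : (Fin n → C) → ℝ := fun D => ∑ i, cf (D i) with hCodef
  set S : (Fin n → C) → ℝ := fun D => ∑ i, Z (D i) with hSdef
  have hJ0 : ∀ D, 0 ≤ J D := fun D => Finset.sum_nonneg (fun i _ => hjf0 _)
  have hK0 : ∀ D, 0 ≤ K D := fun D => Finset.sum_nonneg (fun i _ => hkf0 _)
  set T : ℝ := (n : ℝ) * ε / 4 with hTdef
  have hn0 : (0 : ℝ) < n := by exact_mod_cast Nat.lt_of_lt_of_le Nat.zero_lt_one hn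
  have hT0 : 0 < T := by rw [hTdef]; positivity
  have hEj : ∑ D : Fin n → C, W D * J D = (n : ℝ) * (1/16) := by
    rw [hWdef, hJdef]
    rw [sum_prod_count n w jf hw1]
    congr 1
    rw [Fintype.sum_prod_type, Fintype.sum_bool, Fintype.sum_bool, Fintype.sum_bool]
    simp [hwdef, hjfdef]
    ring
  have hEk : ∑ D : Fin n → C, W D * K D = (n : ℝ) * (d/16) := by
    rw [hWdef, hKdef]
    rw [sum_prod_count n w kf hw1]
    congr 1
    rw [Fintype.sum_prod_type, Fintype.sum_bool, Fintype.sum_bool, Fintype.sum_bool]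
    simp [hwdef, hkfdef]
  have hMJ : ∑ D : Fin n → C, W D * (if ¬(J D ≤ (n:ℝ)/2) then 1 else 0) ≤ 1/8 := by
    have hpt : ∀ D : Fin n → C, W D * (if ¬(J D ≤ (n:ℝ)/2) then 1 else 0)
        ≤ W D * ((2/(n:ℝ)) * J D) := by
      intro D
      apply mul_le_mul_of_nonneg_left _ (hW0 D)
      by_cases h : J D ≤ (n:ℝ)/2
      · rw [if_neg (not_not_intro h)]
        positivity
      · rw [if_pos h]
        push_neg at h
        have hpos : (0:ℝ) ≤ 2/(n:ℝ) := by positivity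
        have h1 := mul_le_mul_of_nonneg_left (le_of_lt h) hpos
        have heq : (2/(n:ℝ)) * ((n:ℝ)/2) = 1 := by field_simp
        linarith
    calc ∑ D : Fin n → C, W D * (if ¬(J D ≤ (n:ℝ)/2) then 1 else 0)
        ≤ ∑ D : Fin n → C, W D * ((2/(n:ℝ)) * J D) := Finset.sum_le_sum (fun D _ => hpt D)
    _ = (2/(n:ℝ)) * ∑ D : Fin n → C, W D * J D := by
        rw [Finset.mul_sum]; exact Finset.sum_congr rfl (fun D _ => by ring)
    _ = (2/(n:ℝ)) * ((n:ℝ) * (1/16)) := by rw [hEj]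
    _ = 1/8 := by field_simp; norm_num
  have hMK : ∑ D : Fin n → C, W D * (if ¬(Λ * K D ≤ T) then 1 else 0) ≤ 1/16 := by
    have hpt : ∀ D : Fin n → C, W D * (if ¬(Λ * K D ≤ T) then 1 else 0)
        ≤ W D * ((Λ/T) * K D) := by
      intro D
      apply mul_le_mul_of_nonneg_left _ (hW0 D)
      by_cases h : Λ * K D ≤ T
      · rw [if_neg (not_not_intro h)]
        positivity
      · rw [if_pos h]
        push_neg at h
        have h1 : (Λ/T) * K D = (Λ * K D)/T := by ring
        rw [h1, le_div_iff₀ hT0, one_mul]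
        exact le_of_lt h
    calc ∑ D : Fin n → C, W D * (if ¬(Λ * K D ≤ T) then 1 else 0)
        ≤ ∑ D : Fin n → C, W D * ((Λ/T) * K D) := Finset.sum_le_sum (fun D _ => hpt D)
    _ = (Λ/T) * ∑ D : Fin n → C, W D * K D := by
        rw [Finset.mul_sum]; exact Finset.sum_congr rfl (fun D _ => by ring)
    _ = (Λ/T) * ((n:ℝ) * (d/16)) := by rw [hEk]
    _ = (Λ * d)/(4 * ε) := by
        rw [hTdef]; field_simp; ring
    _ ≤ 1/16 := by
        rw [div_le_div_iff₀ (by positivity) (by norm_num)]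
        nlinarith
  set G' : (Fin n → C) → Prop := fun D => J D ≤ (n:ℝ)/2 ∧ Λ * K D ≤ T with hG'def
  have hG'sum : 13/16 ≤ ∑ D : Fin n → C, W D * (if G' D then 1 else 0) := by
    have hpt : ∀ D : Fin n → C,
        W D * (1 - (if ¬(J D ≤ (n:ℝ)/2) then 1 else 0) - (if ¬(Λ * K D ≤ T) then 1 else 0))
        ≤ W D * (if G' D then 1 else 0) := by
      intro D
      apply mul_le_mul_of_nonneg_left _ (hW0 D)
      by_cases h1 : J D ≤ (n:ℝ)/2 <;> by_cases h2 : Λ * K D ≤ T <;>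
        simp [hG'def, h1, h2]
    have hsum : ∑ D : Fin n → C,
        W D * (1 - (if ¬(J D ≤ (n:ℝ)/2) then 1 else 0) - (if ¬(Λ * K D ≤ T) then 1 else 0))
        = (∑ D : Fin n → C, W D)
          - (∑ D : Fin n → C, W D * (if ¬(J D ≤ (n:ℝ)/2) then 1 else 0))
          - (∑ D : Fin n → C, W D * (if ¬(Λ * K D ≤ T) then 1 else 0)) := by
      rw [← Finset.sum_sub_distrib, ← Finset.sum_sub_distrib]
      exact Finset.sum_congr rfl (fun D _ => by ring)
    have hle := Finset.sum_le_sum (fun D (_ : D ∈ (univ : Finset (Fin n → C))) => hpt D)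
    rw [hsum, hWsum] at hle
    linarith
  set flipc : C → C := fun c => if c.1 then (true, !c.2) else c with hflipdef
  have hflipflip : ∀ c, flipc (flipc c) = c := by
    rintro ⟨x, y⟩; cases x <;> cases y <;> simp [hflipdef]
  set φ : (Fin n → C) → (Fin n → C) := fun D i => flipc (D i) with hφdef
  have hφinv : Function.Involutive φ := by
    intro D; funext i; simp only [hφdef]; exact hflipflip (D i)
  have hφinj : Function.Injective φ := hφinv.injective
  have hwflip : ∀ c, w (flipc c) = w c := by
    rintro ⟨x, y⟩; cases x <;> cases y <;> simp [hflipdef, hwdef]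
  have hWφ : ∀ D, W (φ D) = W D := by
    intro D; apply Finset.prod_congr rfl; intro i _; exact hwflip (D i)
  have hjflip : ∀ c, jf (flipc c) = jf c := by
    rintro ⟨x, y⟩; cases x <;> cases y <;> simp [hflipdef, hjfdef]
  have hkflip : ∀ c, kf (flipc c) = kf c := by
    rintro ⟨x, y⟩; cases x <;> cases y <;> simp [hflipdef, hkfdef]
  have hJφ : ∀ D, J (φ D) = J D := by
    intro D; apply Finset.sum_congr rfl; intro i _; exact hjflip (D i)
  have hKφ : ∀ D, K (φ D) = K D := by
    intro D; apply Finset.sum_congr rfl; intro i _; exact hkflip (D i)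
  have hcfφ : ∀ c, cf (flipc c) = (-ε) * (1 - jf c) - cf c := by
    rintro ⟨x, y⟩; cases x <;> cases y <;>
      simp [hflipdef, hcfdef, hjfdef, hZdef] <;> linarith
  have hCoφ : ∀ D, Co (φ D) = (-ε) * ((n:ℝ) - J D) - Co D := by
    intro D
    have h1 : Co (φ D) = ∑ i, ((-ε) * (1 - jf (D i)) - cf (D i)) := by
      apply Finset.sum_congr rfl; intro i _; exact hcfφ (D i)
    rw [h1, Finset.sum_sub_distrib, ← Finset.mul_sum, Finset.sum_sub_distrib]
    rw [Finset.sum_const, Finset.card_univ]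
    simp only [hJdef, hCodef, Fintype.card_fun, smul_eq_mul, mul_one]
    simp
  set A1 : Finset (Fin n → C) := univ.filter (fun D => G' D ∧ Co D ≤ -T) with hA1def
  set A2 : Finset (Fin n → C) := univ.filter (fun D => G' D ∧ ¬(Co D ≤ -T)) with hA2def
  have hsplit : ∑ D ∈ univ.filter G', W D = (∑ D ∈ A1, W D) + (∑ D ∈ A2, W D) := by
    have e1 : (univ.filter G').filter (fun D => Co D ≤ -T) = A1 := by
      rw [Finset.filter_filter]
    have e2 : (univ.filter G').filter (fun D => ¬(Co D ≤ -T)) = A2 := by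
      rw [Finset.filter_filter]
    rw [← e1, ← e2]
    exact (Finset.sum_filter_add_sum_filter_not (univ.filter G') (fun D => Co D ≤ -T) W).symm
  have himg : A2.image φ ⊆ A1 := by
    intro D' hD'
    rcases Finset.mem_image.mp hD' with ⟨D, hD, rfl⟩
    rw [hA2def, Finset.mem_filter] at hD
    obtain ⟨-, ⟨hJle, hKle⟩, hCo⟩ := hD
    rw [hA1def, Finset.mem_filter]
    refine ⟨mem_univ _, ⟨?_, ?_⟩, ?_⟩
    · rw [hJφ]; exact hJle
    · rw [hKφ]; exact hKle
    · rw [hCoφ]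
      push_neg at hCo
      have h1 : (n:ℝ)/2 ≤ (n:ℝ) - J D := by linarith
      have h2 : ε * ((n:ℝ)/2) ≤ ε * ((n:ℝ) - J D) :=
        mul_le_mul_of_nonneg_left h1 (le_of_lt hε)
      have h3 : ε * ((n:ℝ)/2) = 2 * T := by rw [hTdef]; ring
      nlinarith
  have hA2A1 : ∑ D ∈ A2, W D ≤ ∑ D ∈ A1, W D := by
    have e1 : ∑ D ∈ A2, W D = ∑ D ∈ A2, W (φ D) :=
      Finset.sum_congr rfl (fun D _ => (hWφ D).symm)
    have e2 : ∑ D ∈ A2.image φ, W D = ∑ D ∈ A2, W (φ D) :=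
      Finset.sum_image (fun x _ y _ h => hφinj h)
    rw [e1, ← e2]
    exact Finset.sum_le_sum_of_subset_of_nonneg himg (fun D _ _ => hW0 D)
  have hUbig : 13/16 ≤ ∑ D ∈ univ.filter G', W D := by
    refine le_trans hG'sum (le_of_eq ?_)
    rw [Finset.sum_filter]
    refine Finset.sum_congr rfl (fun D _ => ?_)
    by_cases h : G' D
    · rw [if_pos h, if_pos h, mul_one]
    · rw [if_neg h, if_neg h, mul_zero]
  have hA1big : 13/32 ≤ ∑ D ∈ A1, W D := by linarith
  have hSbound : ∀ D, S D ≤ Co D + Λ * K D := by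
    intro D
    have h1 : S D - Co D = ∑ i, (Z (D i) - cf (D i)) := by
      simp only [hSdef, hCodef]
      rw [Finset.sum_sub_distrib]
    have h2 : ∑ i, (Z (D i) - cf (D i)) ≤ ∑ i, Λ * kf (D i) := by
      apply Finset.sum_le_sum
      intro i _
      rcases (D i) with ⟨x, y⟩
      cases x <;> cases y <;> simp [hcfdef, hkfdef, hZdef] <;> linarith
    have h3 : ∑ i, Λ * kf (D i) = Λ * K D := by
      simp only [hKdef]
      rw [Finset.mul_sum]
    linarith [h1, h2, h3]
  have hA1S : A1 ⊆ univ.filter (fun D => S D ≤ 0) := by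
    intro D hD
    rw [hA1def, Finset.mem_filter] at hD
    obtain ⟨-, ⟨-, hKle⟩, hCo⟩ := hD
    rw [Finset.mem_filter]
    exact ⟨mem_univ _, by linarith [hSbound D]⟩
  have hfinal : ∑ D ∈ A1, W D ≤ ∑ D : Fin n → C, W D * (if S D ≤ 0 then 1 else 0) := by
    have heq : ∑ D : Fin n → C, W D * (if S D ≤ 0 then 1 else 0)
        = ∑ D ∈ univ.filter (fun D => S D ≤ 0), W D := by
      rw [Finset.sum_filter]
      refine Finset.sum_congr rfl (fun D _ => ?_)
      by_cases h : S D ≤ 0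
      · rw [if_pos h, if_pos h, mul_one]
      · rw [if_neg h, if_neg h, mul_zero]
    rw [heq]
    exact Finset.sum_le_sum_of_subset_of_nonneg hA1S (fun D _ _ => hW0 D)
  calc (1/4 : ℝ) ≤ 13/32 := by norm_num
  _ ≤ ∑ D ∈ A1, W D := hA1big
  _ ≤ ∑ D : Fin n → C, W D * (if S D ≤ 0 then 1 else 0) := hfinal

end MLEFail

set_option maxHeartbeats 2000000 in
open MLEFail in
/-- Misspecified MLE failure: there is an absolute constant `c > 0` such that for any
`α ∈ [0,1]` and `M > e^α`, there exist a prompt distribution `μ`, a data distribution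
`π_D`, and a two-element class `{π₁, π₂}` of conditional models with
`sup_{x,y} |log π_D(y|x) − log π₁(y|x)| ≤ α` and
`Pcov_M(π_D ‖ π₂) ≥ c α²/log M`, yet for every sample size `n ≥ 1`, with probability
at least `1/4` over the i.i.d. sample, `π₂` maximizes the empirical likelihood over
the class (i.e. the MLE equals `π₂`). -/
theorem misspecified_mle_failure :
    ∃ c : ℝ, 0 < c ∧
      ∀ α M : ℝ, 0 ≤ α → α ≤ 1 → Real.exp α < M →
        ∃ (μ : Bool → ℝ) (πD π₁ π₂ : Bool → Bool → ℝ),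
          (∀ x, 0 ≤ μ x) ∧ (∑ x, μ x) = 1 ∧
          (∀ x y, 0 < πD x y) ∧ (∀ x, (∑ y, πD x y) = 1) ∧
          (∀ x y, 0 < π₁ x y) ∧ (∀ x, (∑ y, π₁ x y) = 1) ∧
          (∀ x y, 0 < π₂ x y) ∧ (∀ x, (∑ y, π₂ x y) = 1) ∧
          (∀ x y, |Real.log (πD x y) - Real.log (π₁ x y)| ≤ α) ∧
          (∑ x, ∑ y, μ x * πD x y * (if M ≤ πD x y / π₂ x y then 1 else 0)) ≥
            c * α ^ 2 / Real.log M ∧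
          ∀ n : ℕ, 1 ≤ n →
            (∑ D : Fin n → Bool × Bool,
                (∏ i, μ (D i).1 * πD (D i).1 (D i).2) *
                  (if (∑ i, Real.log (π₁ (D i).1 (D i).2)) ≤
                      ∑ i, Real.log (π₂ (D i).1 (D i).2)
                    then 1 else 0)) ≥ 1 / 4 := by
  classical
  refine ⟨1/512, by norm_num, ?_⟩
  intro α M hα0 hα1 hM
  have hexpα1 : (1:ℝ) ≤ Real.exp α := by
    rw [← Real.exp_zero]; exact Real.exp_le_exp.mpr hα0
  have hM1 : (1:ℝ) < M := lt_of_le_of_lt hexpα1 hM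
  have hM0 : (0:ℝ) < M := by linarith
  have hm : α < Real.log M := by
    rw [← Real.log_exp α]
    exact Real.log_lt_log (Real.exp_pos α) hM
  have hm0 : (0:ℝ) < Real.log M := lt_of_le_of_lt hα0 hm
  by_cases hz : α = 0
  · -- trivial construction for α = 0
    subst hz
    refine ⟨(fun x => if x then (15/16:ℝ) else 1/16), (fun _ _ => (1/2:ℝ)),
      (fun _ _ => (1/2:ℝ)), (fun _ _ => (1/2:ℝ)), ?_, ?_, ?_, ?_, ?_, ?_, ?_, ?_, ?_, ?_, ?_⟩
    · intro x; cases x <;> norm_num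
    · rw [Fintype.sum_bool]; norm_num
    · intro x y; norm_num
    · intro x; rw [Fintype.sum_bool]; norm_num
    · intro x y; norm_num
    · intro x; rw [Fintype.sum_bool]; norm_num
    · intro x y; norm_num
    · intro x; rw [Fintype.sum_bool]; norm_num
    · intro x y; simp
    · have hrhs : (1:ℝ)/512 * 0 ^ 2 / Real.log M = 0 := by norm_num
      rw [ge_iff_le, hrhs]
      apply Finset.sum_nonneg; intro x _
      apply Finset.sum_nonneg; intro y _
      apply mul_nonneg
      · apply mul_nonneg
        · cases x <;> norm_num
        · norm_num
      · split <;> norm_num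
    · intro n hn
      rw [ge_iff_le]
      simp only [le_refl, if_true, mul_one]
      have h1 : ∑ D : Fin n → Bool × Bool,
          ∏ i, (fun c : C => (if c.1 then (15/16:ℝ) else 1/16) * (1/2)) (D i) = 1 :=
        sum_prod_one n (fun c : C => (if c.1 then (15/16:ℝ) else 1/16) * (1/2)) (by
          rw [Fintype.sum_prod_type, Fintype.sum_bool, Fintype.sum_bool, Fintype.sum_bool]
          norm_num)
      calc (1/4 : ℝ) ≤ 1 := by norm_num
      _ = _ := h1.symm
  · -- main construction for α > 0
    have haα : 0 < α := lt_of_le_of_ne hα0 (Ne.symm hz)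
    obtain ⟨A, hAdef⟩ : ∃ A : ℝ, A = Real.exp (-α) := ⟨_, rfl⟩
    have hA0 : 0 < A := by rw [hAdef]; exact Real.exp_pos _
    have hA1 : A ≤ 1 := by
      rw [hAdef, ← Real.exp_zero]; exact Real.exp_le_exp.mpr (by linarith)
    have hA1' : 1 - α ≤ A := by
      have := Real.add_one_le_exp (-α); rw [← hAdef] at this; linarith
    have h2A : 1 ≤ 2 - A := by linarith
    obtain ⟨b, hbdef⟩ : ∃ b : ℝ, b = Real.log (2 - A) := ⟨_, rfl⟩
    have hb0 : 0 ≤ b := by rw [hbdef]; exact Real.log_nonneg h2A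
    have hbub : b ≤ α - α^2/8 := by
      have h1 : 2 - A ≤ 1 + α := by linarith
      have hv0 : 0 ≤ α - α^2/8 := by nlinarith
      have h2 : 1 + (α - α^2/8)/2 ≤ Real.exp ((α - α^2/8)/2) := by
        have := Real.add_one_le_exp ((α - α^2/8)/2); linarith
      have h3 : Real.exp (α - α^2/8)
          = Real.exp ((α - α^2/8)/2) * Real.exp ((α - α^2/8)/2) := by
        rw [← Real.exp_add]; ring_nf
      have h4 : (1 + (α - α^2/8)/2) * (1 + (α - α^2/8)/2)
          ≤ Real.exp ((α - α^2/8)/2) * Real.exp ((α - α^2/8)/2) :=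
        mul_le_mul h2 h2 (by linarith) (le_of_lt (Real.exp_pos _))
      have h5 : 1 + α ≤ (1 + (α - α^2/8)/2) * (1 + (α - α^2/8)/2) := by
        nlinarith [sq_nonneg (1 - α/8)]
      have h6 : 2 - A ≤ Real.exp (α - α^2/8) := by rw [h3]; linarith
      rw [hbdef, Real.log_le_iff_le_exp (by linarith : (0:ℝ) < 2 - A)]
      exact h6
    obtain ⟨ε, hεdef⟩ : ∃ e : ℝ, e = α - b := ⟨_, rfl⟩
    have hε8 : α^2/8 ≤ ε := by rw [hεdef]; linarith
    have hε0 : 0 < ε := lt_of_lt_of_le (by positivity) hε8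
    obtain ⟨Λ, hΛdef⟩ : ∃ L : ℝ, L = Real.log M - α := ⟨_, rfl⟩
    have hΛ0 : 0 < Λ := by rw [hΛdef]; linarith
    obtain ⟨d, hddef⟩ : ∃ d : ℝ, d = α^2/(32*Real.log M) := ⟨_, rfl⟩
    have h32m : (0:ℝ) < 32 * Real.log M := by linarith
    have hd0 : 0 < d := by rw [hddef]; exact div_pos (pow_pos haα 2) h32m
    have hdle : d ≤ 1/32 := by
      rw [hddef, div_le_iff₀ h32m]
      nlinarith
    have hd1 : d ≤ 1 := by linarith
    have hdA : d * A ≤ d := mul_le_of_le_one_right (le_of_lt hd0) hA1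
    have hdA0 : 0 < d * A := mul_pos hd0 hA0
    have hAM : 1 ≤ A * M := by
      have h1 : A * M = M / Real.exp α := by rw [hAdef, Real.exp_neg]; ring
      rw [h1, le_div_iff₀ (Real.exp_pos α), one_mul]
      exact le_of_lt hM
    have hdMA : d/M ≤ d*A := by
      rw [div_le_iff₀ hM0]
      nlinarith
    have hdM0 : 0 < d / M := div_pos hd0 hM0
    have hdM : d / M ≤ d := div_le_self (le_of_lt hd0) (le_of_lt hM1)
    have hdΛ : 4 * (d * Λ) ≤ ε := by
      have h1 : d * Λ ≤ d * Real.log M := by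
        apply mul_le_mul_of_nonneg_left _ (le_of_lt hd0)
        rw [hΛdef]; linarith
      have h2 : d * Real.log M = α^2/32 := by
        rw [hddef]; field_simp
      linarith
    -- logarithm computations
    have hlog2 : Real.log ((1:ℝ)/2) = -Real.log 2 := by
      rw [Real.log_div one_ne_zero two_ne_zero, Real.log_one]; ring
    have hlogA2 : Real.log (A/2) = -α - Real.log 2 := by
      rw [Real.log_div (ne_of_gt hA0) two_ne_zero, hAdef, Real.log_exp]
    have hlog1A2 : Real.log (1 - A/2) = b - Real.log 2 := by
      have h1 : 1 - A/2 = (2 - A)/2 := by ring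
      rw [h1, Real.log_div (by linarith : (2:ℝ) - A ≠ 0) two_ne_zero, hbdef]
    have hlogdA : Real.log (d*A) = Real.log d - α := by
      rw [Real.log_mul (ne_of_gt hd0) (ne_of_gt hA0), hAdef, Real.log_exp]; ring
    have hlogdM : Real.log (d/M) = Real.log d - Real.log M :=
      Real.log_div (ne_of_gt hd0) (ne_of_gt hM0)
    refine ⟨(fun x => if x then (15/16:ℝ) else 1/16),
      (fun x y => if x then (1/2:ℝ) else (if y then d else 1 - d)),
      (fun x y => if x then (if y then A/2 else 1 - A/2) else (if y then d*A else 1 - d*A)),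
      (fun x y => if x then (1/2:ℝ) else (if y then d/M else 1 - d/M)),
      ?_, ?_, ?_, ?_, ?_, ?_, ?_, ?_, ?_, ?_, ?_⟩
    · intro x; cases x <;> norm_num
    · rw [Fintype.sum_bool]; norm_num
    · intro x y
      cases x <;> cases y <;> norm_num <;> linarith [hd0, hdle]
    · intro x; cases x
      · rw [Fintype.sum_bool]; norm_num
      · rw [Fintype.sum_bool]; norm_num
    · intro x y
      cases x <;> cases y <;> norm_num <;> linarith [hd0, hdle, hdA, hdA0, hA0, hA1]
    · intro x; cases x
      · rw [Fintype.sum_bool]; norm_num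
      · rw [Fintype.sum_bool]; norm_num
    · intro x y
      cases x <;> cases y <;> norm_num <;> linarith [hdM, hdM0, hdle]
    · intro x; cases x
      · rw [Fintype.sum_bool]; norm_num
      · rw [Fintype.sum_bool]; norm_num
    · -- closeness
      intro x y
      cases x <;> cases y
      · -- (false, false)
        simp only [Bool.false_eq_true, if_false]
        have h1 : 0 < 1 - d := by linarith
        have h1' : 0 < 1 - d*A := by linarith [hdA]
        have hmono : Real.log (1-d) ≤ Real.log (1-d*A) :=
          Real.log_le_log h1 (by linarith [hdA])
        rw [abs_sub_comm, abs_of_nonneg (by linarith)]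
        have e1 : 1 + α ≤ Real.exp α := by have := Real.add_one_le_exp α; linarith
        have e2 : (1+α)*(1-d) ≤ Real.exp α * (1-d) :=
          mul_le_mul_of_nonneg_right e1 (by linarith)
        have e3 : 1 - d*A ≤ (1+α)*(1-d) := by
          nlinarith [mul_le_mul_of_nonneg_left hA1' (le_of_lt hd0),
            mul_le_mul_of_nonneg_left hdle (le_of_lt haα)]
        have h2 : 1 - d*A ≤ Real.exp α * (1-d) := by linarith
        have h3 : Real.log (1-d*A) ≤ Real.log (Real.exp α * (1-d)) :=
          Real.log_le_log h1' h2
        rw [Real.log_mul (ne_of_gt (Real.exp_pos α)) (ne_of_gt h1), Real.log_exp] at h3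
        linarith
      · -- (false, true)
        simp only [Bool.false_eq_true, if_false, if_true]
        rw [hlogdA]
        rw [show Real.log d - (Real.log d - α) = α by ring, abs_of_nonneg hα0]
      · -- (true, false)
        simp only [Bool.false_eq_true, if_true, if_false]
        rw [hlog2, hlog1A2]
        rw [show -Real.log 2 - (b - Real.log 2) = -b by ring, abs_neg, abs_of_nonneg hb0]
        nlinarith
      · -- (true, true)
        simp only [if_true]
        rw [hlog2, hlogA2]
        rw [show -Real.log 2 - (-α - Real.log 2) = α by ring, abs_of_nonneg hα0]
    · -- coverage
      rw [ge_iff_le, Fintype.sum_bool, Fintype.sum_bool, Fintype.sum_bool]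
      simp only [Bool.false_eq_true, if_true, if_false]
      have hrat : d / (d/M) = M := by
        field_simp
      have hterm : ((1:ℝ)/16) * d * (if M ≤ d / (d/M) then (1:ℝ) else 0) = 1/16 * d := by
        rw [hrat, if_pos (le_refl M), mul_one]
      have hval : (1:ℝ)/512 * α^2 / Real.log M = 1/16 * d := by
        rw [hddef]; field_simp; ring
      have t1 : (0:ℝ) ≤ 15/16 * (1/2) * (if M ≤ 1/2/(1/2) then (1:ℝ) else 0) := by
        apply mul_nonneg (by norm_num); split <;> norm_num
      have t4 : (0:ℝ) ≤ 1/16 * (1 - d) * (if M ≤ (1-d) / (1-d/M) then (1:ℝ) else 0) := by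
        apply mul_nonneg (by nlinarith); split <;> norm_num
      nlinarith [hterm, hval, t1, t4]
    · -- the MLE failure probability bound
      intro n hn
      rw [ge_iff_le]
      obtain ⟨zneg, hznegdef⟩ :
          ∃ z : ℝ, z = Real.log (1 - d*A) - Real.log (1 - d/M) := ⟨_, rfl⟩
      have h1' : 0 < 1 - d*A := by linarith [hdA]
      have hzneg : zneg ≤ 0 := by
        rw [hznegdef]
        have := Real.log_le_log h1' (by linarith [hdMA] : 1 - d*A ≤ 1 - d/M)
        linarith
      have hzsum : (-α) + b = -ε := by rw [hεdef]; ring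
      have hkey := prob_main (-α) b ε Λ d zneg hzsum hε0 hΛ0 hzneg (le_of_lt hd0) hd1 hdΛ n hn
      refine le_trans hkey (le_of_eq ?_)
      apply Finset.sum_congr rfl
      intro D _
      have hwc : ∀ c : C,
          (fun c : C => if c.1 then (15/32:ℝ) else if c.2 then d/16 else (1-d)/16) c
          = (if c.1 then (15/16:ℝ) else 1/16) *
            (if c.1 then (1/2:ℝ) else (if c.2 then d else 1-d)) := by
        rintro ⟨x, y⟩; cases x <;> cases y <;> norm_num <;> ring
      have hZc : ∀ c : C,
          (fun c : C => if c.1 then (if c.2 then -α else b) else (if c.2 then Λ else zneg)) c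
          = Real.log (if c.1 then (if c.2 then A/2 else 1 - A/2) else (if c.2 then d*A else 1 - d*A))
            - Real.log (if c.1 then (1/2:ℝ) else (if c.2 then d/M else 1 - d/M)) := by
        rintro ⟨x, y⟩
        cases x <;> cases y <;> simp only [Bool.false_eq_true, if_true, if_false]
        · rw [hznegdef]
        · rw [hlogdA, hlogdM, hΛdef]; ring
        · rw [hlog2, hlog1A2]; ring
        · rw [hlog2, hlogA2]; ring
      congr 1
      · exact Finset.prod_congr rfl (fun i _ => hwc (D i))
      · apply if_congr _ rfl rfl
        rw [Finset.sum_congr rfl (fun i (_ : i ∈ univ) => hZc (D i)), Finset.sum_sub_distrib]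
        exact sub_nonpos
end
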